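/- arXiv:2309.14185 — 11 statements merged into one kernel-verified Lean document; each statement's English description precedes it below -/
import Mathlib

section
/- Let G = (V, E, τ) be a temporal graph and let F(G) be its flattening with respect to vertices s and z (a static directed graph with τ copies of each vertex plus s and z, with intra-layer edges for temporal edges, 'waiting' edges between consecutive copies of the same vertex, and appropriate edges from s and to z). If S ⊆ V \ {s,z} is an (s,z)-temporal separator in G (i.e., removal of S eliminates all temporal paths from s to z), then the set S' = {v_{i,t'} : v_i ∈ S, t' ∈ [τ]} is an (s,z)-separator in the static graph F(G), and |S'| = τ·|S|. -/
def IsTempPath {V : Type} (E : Set (V × V × ℕ)) (s z : V)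
    (P : List (V × V × ℕ)) : Prop :=
  P ≠ [] ∧ (∀ e ∈ P, e ∈ E) ∧
    (∀ e, P.head? = some e → e.1 = s) ∧
    (∀ e, P.getLast? = some e → e.2.1 = z) ∧
    List.Chain' (fun e f => e.2.1 = f.1 ∧ e.2.2 ≤ f.2.2) P

def Avoids {V : Type} (P : List (V × V × ℕ)) (S : Set V) : Prop :=
  ∀ e ∈ P, e.1 ∉ S ∧ e.2.1 ∉ S

def ttime {V : Type} (P : List (V × V × ℕ)) : ℕ :=
  ((P.getLast?.map (fun e => e.2.2)).getD 0) + 1 - ((P.head?.map (fun e => e.2.2)).getD 0)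

def IsTempSep {V : Type} (E : Set (V × V × ℕ)) (s z : V) (S : Set V) : Prop :=
  s ∉ S ∧ z ∉ S ∧ ∀ P, IsTempPath E s z P → ¬ Avoids P S

def IsTempSepT {V : Type} (E : Set (V × V × ℕ)) (s z : V) (t : ℕ) (S : Set V) : Prop :=
  s ∉ S ∧ z ∉ S ∧ ∀ P, IsTempPath E s z P → ttime P ≤ t → ¬ Avoids P S

def FlatAdj {V : Type} (E : Set (V × V × ℕ)) (τ : ℕ) (s z : V) :
    ((V × ℕ) ⊕ Bool) → ((V × ℕ) ⊕ Bool) → Prop := fun a b =>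
  (∃ u v t, a = Sum.inl (u, t) ∧ b = Sum.inl (v, t) ∧ (u, v, t) ∈ E ∧
      u ≠ s ∧ u ≠ z ∧ v ≠ s ∧ v ≠ z) ∨
  (∃ u t, a = Sum.inl (u, t) ∧ b = Sum.inl (u, t + 1) ∧ 1 ≤ t ∧ t + 1 ≤ τ ∧
      u ≠ s ∧ u ≠ z) ∨
  (∃ v t, a = Sum.inr false ∧ b = Sum.inl (v, t) ∧ (s, v, t) ∈ E ∧ v ≠ s ∧ v ≠ z) ∨
  (∃ v t, a = Sum.inl (v, t) ∧ b = Sum.inr true ∧ (z, v, t) ∈ E ∧ v ≠ s ∧ v ≠ z)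

def IsStaticSep {α : Type} (A : α → α → Prop) (a b : α) (S : Set α) : Prop :=
  a ∉ S ∧ b ∉ S ∧
    ¬ Relation.ReflTransGen (fun x y => A x y ∧ x ∉ S ∧ y ∉ S) a b

/-- A partial temporal path from `s` ending at vertex `v` with last time ≤ `t`, avoiding `S`. -/
def Good {V : Type} (E : Set (V × V × ℕ)) (s : V) (S : Set V) (v : V) (t : ℕ)
    (P : List (V × V × ℕ)) : Prop :=
  P ≠ [] ∧ (∀ e ∈ P, e ∈ E) ∧ (∀ e, P.head? = some e → e.1 = s) ∧
  List.Chain' (fun e f => e.2.1 = f.1 ∧ e.2.2 ≤ f.2.2) P ∧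
  (∀ e, P.getLast? = some e → e.2.1 = v ∧ e.2.2 ≤ t) ∧ Avoids P S

lemma Good.mono {V : Type} {E : Set (V × V × ℕ)} {s : V} {S : Set V} {v : V} {t t' : ℕ}
    {P : List (V × V × ℕ)} (h : Good E s S v t P) (htt : t ≤ t') : Good E s S v t' P := by
  obtain ⟨h1, h2, h3, h4, h5, h6⟩ := h
  exact ⟨h1, h2, h3, h4, fun e he => ⟨(h5 e he).1, (h5 e he).2.trans htt⟩, h6⟩

lemma Good.append {V : Type} {E : Set (V × V × ℕ)} {s : V} {S : Set V} {v w : V} {t t' : ℕ}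
    {P : List (V × V × ℕ)} (h : Good E s S v t P) (hE : (v, w, t') ∈ E) (ht : t ≤ t')
    (hv : v ∉ S) (hw : w ∉ S) : Good E s S w t' (P ++ [(v, w, t')]) := by
  obtain ⟨h1, h2, h3, h4, h5, h6⟩ := h
  refine ⟨by simp, ?_, ?_, ?_, ?_, ?_⟩
  · intro e he
    rcases List.mem_append.mp he with he | he
    · exact h2 e he
    · simp at he; subst he; exact hE
  · intro e he
    apply h3
    rwa [List.head?_append_of_ne_nil _ h1] at he
  · rw [List.Chain', List.isChain_append]
    refine ⟨h4, List.isChain_singleton _, ?_⟩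
    intro x hx y hy
    simp at hy; subst hy
    exact ⟨(h5 x hx).1, (h5 x hx).2.trans ht⟩
  · intro e he
    rw [List.getLast?_concat] at he
    injection he with he; subst he
    exact ⟨rfl, le_refl _⟩
  · intro e he
    rcases List.mem_append.mp he with he | he
    · exact h6 e he
    · simp at he; subst he; exact ⟨hv, hw⟩

theorem stmt0 {V : Type} (E : Set (V × V × ℕ)) (τ : ℕ) (s z : V) (hsz : s ≠ z)
    (hE : ∀ e ∈ E, 1 ≤ e.2.2 ∧ e.2.2 ≤ τ)
    (hsym : ∀ u v t, (u, v, t) ∈ E → (v, u, t) ∈ E)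
    (S : Set V) (hS : S.Finite) (hsep : IsTempSep E s z S) :
    IsStaticSep (FlatAdj E τ s z) (Sum.inr false) (Sum.inr true)
      {a | ∃ v t', a = Sum.inl (v, t') ∧ v ∈ S ∧ 1 ≤ t' ∧ t' ≤ τ} ∧
    ({a : (V × ℕ) ⊕ Bool | ∃ v t', a = Sum.inl (v, t') ∧ v ∈ S ∧ 1 ≤ t' ∧ t' ≤ τ}).ncard
      = τ * S.ncard := by
  obtain ⟨hsS, hzS, hP⟩ := hsep
  set S' : Set ((V × ℕ) ⊕ Bool) :=
    {a | ∃ v t', a = Sum.inl (v, t') ∧ v ∈ S ∧ 1 ≤ t' ∧ t' ≤ τ} with hS'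
  constructor
  · refine ⟨by rintro ⟨v, t', h, -⟩; simp at h, by rintro ⟨v, t', h, -⟩; simp at h, ?_⟩
    intro hreach
    have key : ∀ b, Relation.ReflTransGen
        (fun x y => FlatAdj E τ s z x y ∧ x ∉ S' ∧ y ∉ S') (Sum.inr false) b →
        b = Sum.inr false ∨
          ∃ v t P, b = Sum.inl (v, t) ∧ v ∉ S ∧ Good E s S v t P := by
      intro b h
      induction h with
      | refl => exact Or.inl rfl
      | tail h₁ h₂ ih =>
        obtain ⟨hadj, hcS, hbS⟩ := h₂
        rcases hadj with ⟨u, v, t, hc, hb, hEe, hus, huz, hvs, hvz⟩ |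
            ⟨u, t, hc, hb, ht1, ht2, hus, huz⟩ |
            ⟨v, t, hc, hb, hEe, hvs, hvz⟩ |
            ⟨v, t, hc, hb, hEe, hvs, hvz⟩
        · -- intra-layer edge
          rcases ih with rfl | ⟨u', t', P, hc', hu'S, good⟩
          · simp at hc
          · rw [hc'] at hc
            obtain ⟨h1, h2⟩ : u' = u ∧ t' = t := by
              injection hc with h'; injection h' with h1 h2; exact ⟨h1, h2⟩
            rw [h1] at good hu'S; rw [h2] at good
            have htτ := hE _ hEe
            have hvS : v ∉ S := by
              intro hvS; exact hbS ⟨v, t, hb, hvS, htτ.1, htτ.2⟩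
            exact Or.inr ⟨v, t, _, hb, hvS,
              good.append hEe (le_refl _) hu'S hvS⟩
        · -- waiting edge
          rcases ih with rfl | ⟨u', t', P, hc', hu'S, good⟩
          · simp at hc
          · rw [hc'] at hc
            obtain ⟨h1, h2⟩ : u' = u ∧ t' = t := by
              injection hc with h'; injection h' with h1 h2; exact ⟨h1, h2⟩
            rw [h1] at good hu'S; rw [h2] at good
            exact Or.inr ⟨u, t + 1, P, hb, hu'S, good.mono (Nat.le_succ t)⟩
        · -- edge from s
          have htτ := hE _ hEe
          have hvS : v ∉ S := by
            intro hvS; exact hbS ⟨v, t, hb, hvS, htτ.1, htτ.2⟩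
          refine Or.inr ⟨v, t, [(s, v, t)], hb, hvS, ?_⟩
          refine ⟨by simp, by simpa using hEe, by simp, List.isChain_singleton _, ?_, ?_⟩
          · intro e he; simp at he; subst he; exact ⟨rfl, le_refl _⟩
          · intro e he; simp at he; subst he; exact ⟨hsS, hvS⟩
        · -- edge to z: contradiction with temporal separator
          exfalso
          rcases ih with rfl | ⟨u', t', P, hc', hu'S, good⟩
          · simp at hc
          · rw [hc'] at hc
            obtain ⟨h1, h2⟩ : u' = v ∧ t' = t := by
              injection hc with h'; injection h' with h1 h2; exact ⟨h1, h2⟩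
            rw [h1] at good hu'S; rw [h2] at good
            have hEvz : (v, z, t) ∈ E := hsym _ _ _ hEe
            have good' : Good E s S z t (P ++ [(v, z, t)]) :=
              good.append hEvz (le_refl _) hu'S hzS
            obtain ⟨g1, g2, g3, g4, g5, g6⟩ := good'
            refine hP (P ++ [(v, z, t)]) ⟨g1, g2, g3, fun e he => (g5 e he).1, g4⟩ g6
    rcases key _ hreach with h | ⟨v, t, P, h, -⟩ <;> simp at h
  · -- cardinality
    have himg : S' = Sum.inl '' (S ×ˢ Set.Icc 1 τ) := by
      ext a
      constructor
      · rintro ⟨v, t', rfl, hv, h1, h2⟩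
        exact ⟨(v, t'), ⟨hv, h1, h2⟩, rfl⟩
      · rintro ⟨⟨v, t'⟩, ⟨hv, h1, h2⟩, rfl⟩
        exact ⟨v, t', rfl, hv, h1, h2⟩
    rw [himg, Set.ncard_image_of_injective _ Sum.inl_injective]
    have : (S ×ˢ Set.Icc 1 τ).ncard = S.ncard * (Set.Icc 1 τ : Set ℕ).ncard := by
      rw [← Nat.card_coe_set_eq, ← Nat.card_coe_set_eq, ← Nat.card_coe_set_eq,
        ← Nat.card_prod]
      exact Nat.card_congr (Equiv.Set.prod _ _)
    rw [this, ← Finset.coe_Icc, Set.ncard_coe_finset, Nat.card_Icc]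
    simp [mul_comm]
end

section
/- Let G = (V, E, τ) be a temporal graph and F(G) its flattening with respect to s and z. If S' is an (s,z)-separator in the static directed graph F(G), then S = {v_i ∈ V : ∃ t' ∈ [τ] with v_{i,t'} ∈ S'} is an (s,z)-temporal separator in G, and |S| ≤ |S'|. -/
private lemma wait_walk {V : Type} {E : Set (V × V × ℕ)} {τ : ℕ} {s z : V}
    {S' : Set ((V × ℕ) ⊕ Bool)} (u : V) (hus : u ≠ s) (huz : u ≠ z)
    (hsafe : ∀ t, 1 ≤ t → t ≤ τ → (Sum.inl (u, t) : (V × ℕ) ⊕ Bool) ∉ S')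
    (t₀ : ℕ) (ht₀ : 1 ≤ t₀) :
    ∀ t, t₀ ≤ t → t ≤ τ →
      Relation.ReflTransGen (fun x y => FlatAdj E τ s z x y ∧ x ∉ S' ∧ y ∉ S')
        (Sum.inl (u, t₀)) (Sum.inl (u, t)) := by
  intro t
  induction t with
  | zero => intro h _; omega
  | succ n ih =>
    intro h hτ
    rcases Nat.lt_or_ge t₀ (n + 1) with hlt | hge
    · have hn : t₀ ≤ n := by omega
      refine (ih hn (by omega)).tail ?_
      refine ⟨Or.inr (Or.inl ⟨u, n, rfl, rfl, by omega, hτ, hus, huz⟩), ?_, ?_⟩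
      · exact hsafe n (by omega) (by omega)
      · exact hsafe (n + 1) (by omega) hτ
    · have : t₀ = n + 1 := by omega
      subst this
      exact Relation.ReflTransGen.refl

private lemma core_walk {V : Type} {E : Set (V × V × ℕ)} {τ : ℕ} {s z : V}
    (hsz : s ≠ z)
    (hE : ∀ e ∈ E, 1 ≤ e.2.2 ∧ e.2.2 ≤ τ)
    (hsym : ∀ u v t, (u, v, t) ∈ E → (v, u, t) ∈ E)
    (hnoedge : ∀ t', (s, z, t') ∉ E)
    {S' : Set ((V × ℕ) ⊕ Bool)} {S : Set V}
    (hfalse : (Sum.inr false : (V × ℕ) ⊕ Bool) ∉ S')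
    (htrue : (Sum.inr true : (V × ℕ) ⊕ Bool) ∉ S')
    (hSafe : ∀ v t, 1 ≤ t → t ≤ τ → v ∉ S → (Sum.inl (v, t) : (V × ℕ) ⊕ Bool) ∉ S') :
    ∀ P : List (V × V × ℕ), P ≠ [] → (∀ e ∈ P, e ∈ E) →
      List.Chain' (fun e f => e.2.1 = f.1 ∧ e.2.2 ≤ f.2.2) P →
      Avoids P S → (∀ e, P.getLast? = some e → e.2.1 = z) →
      ∀ a t₀, 1 ≤ t₀ →
        (∀ e, P.head? = some e → a = e.1 ∧ t₀ ≤ e.2.2) →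
        (a = s ∨ (a ≠ s ∧ a ≠ z ∧ a ∉ S ∧
          Relation.ReflTransGen (fun x y => FlatAdj E τ s z x y ∧ x ∉ S' ∧ y ∉ S')
            (Sum.inr false) (Sum.inl (a, t₀)))) →
        Relation.ReflTransGen (fun x y => FlatAdj E τ s z x y ∧ x ∉ S' ∧ y ∉ S')
          (Sum.inr false) (Sum.inr true) := by
  intro P
  induction P with
  | nil => intro h; exact absurd rfl h
  | cons e rest ih =>
    obtain ⟨u, v, t⟩ := e
    intro _ hmem hchain hav hlast a t₀ ht₀ hhead hstart
    obtain ⟨hau, ht₀t⟩ := hhead (u, v, t) rfl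
    obtain rfl : a = u := hau
    have heE : (a, v, t) ∈ E := hmem (a, v, t) List.mem_cons_self
    obtain ⟨ht1, htτ⟩ := hE _ heE
    have ht₀t' : t₀ ≤ t := ht₀t
    have ht1' : 1 ≤ t := ht1
    have htτ' : t ≤ τ := htτ
    obtain ⟨huS, hvS⟩ := hav (a, v, t) List.mem_cons_self
    have huS' : a ∉ S := huS
    have hvS' : v ∉ S := hvS
    by_cases hvz : v = z
    · rcases hstart with hus | ⟨has, haz, haS, hwalk⟩
      · rw [hus, hvz] at heE
        exact absurd heE (hnoedge t)
      · have hw := wait_walk (E := E) (τ := τ) (s := s) (z := z) (S' := S') a has haz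
          (fun t' h1 h2 => hSafe a t' h1 h2 haS) t₀ ht₀ t ht₀t' htτ'
        have heE' : (a, z, t) ∈ E := by rw [← hvz]; exact heE
        refine (hwalk.trans hw).tail
          ⟨Or.inr (Or.inr (Or.inr ⟨a, t, rfl, rfl, hsym a z t heE', has, haz⟩)),
            hSafe a t ht1' htτ' haS, htrue⟩
    · by_cases hvs : v = s
      · cases rest with
        | nil =>
          have hlast' : v = z := hlast (a, v, t) (by simp)
          exact absurd hlast' hvz
        | cons f rest' =>
          obtain ⟨⟨hvf, htf⟩, hchain'⟩ := List.isChain_cons_cons.mp hchain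
          have hvf' : v = f.1 := hvf
          have htf' : t ≤ f.2.2 := htf
          refine ih (by simp) (fun e' he' => hmem e' (List.mem_cons_of_mem _ he'))
            hchain' (fun e' he' => hav e' (List.mem_cons_of_mem _ he'))
            (fun e' he' => hlast e' (by rw [List.getLast?_cons_cons]; exact he'))
            s t ht1' ?_ (Or.inl rfl)
          intro e' he'
          rw [List.head?_cons, Option.some_inj] at he'
          subst he'
          exact ⟨by rw [← hvs]; exact hvf', htf'⟩
      · cases rest with
        | nil =>
          have hlast' : v = z := hlast (a, v, t) (by simp)
          exact absurd hlast' hvz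
        | cons f rest' =>
          obtain ⟨⟨hvf, htf⟩, hchain'⟩ := List.isChain_cons_cons.mp hchain
          have hvf' : v = f.1 := hvf
          have htf' : t ≤ f.2.2 := htf
          have hwalkv : Relation.ReflTransGen
              (fun x y => FlatAdj E τ s z x y ∧ x ∉ S' ∧ y ∉ S')
              (Sum.inr false) (Sum.inl (v, t)) := by
            rcases hstart with hus | ⟨has, haz, haS, hwalk⟩
            · have heE' : (s, v, t) ∈ E := by rw [← hus]; exact heE
              exact Relation.ReflTransGen.single
                ⟨Or.inr (Or.inr (Or.inl ⟨v, t, rfl, rfl, heE', hvs, hvz⟩)),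
                  hfalse, hSafe v t ht1' htτ' hvS'⟩
            · have hw := wait_walk (E := E) (τ := τ) (s := s) (z := z) (S' := S') a has haz
                (fun t' h1 h2 => hSafe a t' h1 h2 haS) t₀ ht₀ t ht₀t' htτ'
              exact (hwalk.trans hw).tail
                ⟨Or.inl ⟨a, v, t, rfl, rfl, heE, has, haz, hvs, hvz⟩,
                  hSafe a t ht1' htτ' haS, hSafe v t ht1' htτ' hvS'⟩
          refine ih (by simp) (fun e' he' => hmem e' (List.mem_cons_of_mem _ he'))
            hchain' (fun e' he' => hav e' (List.mem_cons_of_mem _ he'))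
            (fun e' he' => hlast e' (by rw [List.getLast?_cons_cons]; exact he'))
            v t ht1' ?_ (Or.inr ⟨hvs, hvz, hvS', hwalkv⟩)
          intro e' he'
          rw [List.head?_cons, Option.some_inj] at he'
          subst he'
          exact ⟨hvf', htf'⟩

theorem stmt1 {V : Type} (E : Set (V × V × ℕ)) (τ : ℕ) (s z : V) (hsz : s ≠ z)
    (hE : ∀ e ∈ E, 1 ≤ e.2.2 ∧ e.2.2 ≤ τ)
    (hsym : ∀ u v t, (u, v, t) ∈ E → (v, u, t) ∈ E)
    (hnoedge : ∀ t', (s, z, t') ∉ E)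
    (S' : Set ((V × ℕ) ⊕ Bool)) (hS' : S'.Finite)
    (hvalid : ∀ a ∈ S', ∃ v t', a = Sum.inl (v, t') ∧ v ≠ s ∧ v ≠ z ∧ 1 ≤ t' ∧ t' ≤ τ)
    (hsep : IsStaticSep (FlatAdj E τ s z) (Sum.inr false) (Sum.inr true) S') :
    IsTempSep E s z {v | ∃ t', 1 ≤ t' ∧ t' ≤ τ ∧ Sum.inl (v, t') ∈ S'} ∧
    ({v | ∃ t', 1 ≤ t' ∧ t' ≤ τ ∧ Sum.inl (v, t') ∈ S'}).ncard ≤ S'.ncard := by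
  obtain ⟨hfalse, htrue, hnowalk⟩ := hsep
  set S : Set V := {v | ∃ t', 1 ≤ t' ∧ t' ≤ τ ∧ Sum.inl (v, t') ∈ S'} with hSdef
  have hsS : s ∉ S := by
    rintro ⟨t', _, _, hmem⟩
    obtain ⟨v, t'', heq, hvs, _⟩ := hvalid _ hmem
    simp only [Sum.inl.injEq, Prod.mk.injEq] at heq
    exact hvs heq.1.symm
  have hzS : z ∉ S := by
    rintro ⟨t', _, _, hmem⟩
    obtain ⟨v, t'', heq, _, hvz, _⟩ := hvalid _ hmem
    simp only [Sum.inl.injEq, Prod.mk.injEq] at heq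
    exact hvz heq.1.symm
  have hSafe : ∀ v t, 1 ≤ t → t ≤ τ → v ∉ S →
      (Sum.inl (v, t) : (V × ℕ) ⊕ Bool) ∉ S' := by
    intro v t h1 h2 hv hmem
    exact hv ⟨t, h1, h2, hmem⟩
  constructor
  · refine ⟨hsS, hzS, ?_⟩
    intro P hP hav
    obtain ⟨hne, hmem, hhead, hlast, hchain⟩ := hP
    apply hnowalk
    refine core_walk hsz hE hsym hnoedge hfalse htrue hSafe P hne hmem hchain hav hlast
      s 1 le_rfl ?_ (Or.inl rfl)
    intro e he
    have heP : e ∈ P := List.mem_of_mem_head? he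
    exact ⟨(hhead e he).symm, (hE e (hmem e heP)).1⟩
  · classical
    have himg : S ⊆ (fun a => match a with
        | Sum.inl (v, _) => v
        | Sum.inr _ => s) '' S' := by
      rintro v ⟨t', _, _, h⟩
      exact ⟨Sum.inl (v, t'), h, rfl⟩
    calc S.ncard ≤ _ := Set.ncard_le_ncard himg (hS'.image _)
      _ ≤ S'.ncard := Set.ncard_image_le hS'
end

section
/- Let (U, 𝒮) be a Set Cover instance with universe U = {1,...,n} and family 𝒮 = {S_1,...,S_m} covering U. Let f(U,𝒮) be the temporal graph on vertex set {v_1,...,v_m} ∪ {s,z} where, for each element i ∈ U with 𝓕_i = {S_{i_1},...,S_{i_{k_i}}} (the sets containing i, in increasing index order), the edge set includes the path s → v_{i_1} → v_{i_2} → ... → v_{i_{k_i}} → z with all edges labeled time i·t. Then for any index set J ⊆ [m], the vertex set {v_j : j ∈ J} is an (s,z,t)-temporal separator for f(U,𝒮) if and only if {S_j : j ∈ J} is a set cover of U. -/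
/-- Symmetrize a temporal edge set (undirected temporal graph). -/
def Esym {V : Type} (A : Set (V × V × ℕ)) : Set (V × V × ℕ) :=
  A ∪ {e | (e.2.1, e.1, e.2.2) ∈ A}

/-- The indices of the sets containing element `i`, in increasing order. -/
def sortedSets {n m : ℕ} (Sfam : Fin m → Finset (Fin n)) (i : Fin n) : List (Fin m) :=
  (Finset.univ.filter (fun j => i ∈ Sfam j)).sort (· ≤ ·)

/-- The edges of the path s → v_{i_1} → ... → v_{i_k} → z, all at time θ. -/
def pathEdges {m : ℕ} (l : List (Fin m)) (θ : ℕ) :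
    List ((Fin m ⊕ Bool) × (Fin m ⊕ Bool) × ℕ) :=
  List.zipWith (fun a b => (a, b, θ)) (Sum.inr false :: l.map Sum.inl)
    (l.map Sum.inl ++ [Sum.inr true])

/-- The temporal graph f(U, 𝒮) of the set-cover reduction. -/
def scE (n m t : ℕ) (Sfam : Fin m → Finset (Fin n)) :
    Set ((Fin m ⊕ Bool) × (Fin m ⊕ Bool) × ℕ) :=
  Esym {e | ∃ i : Fin n, e ∈ pathEdges (sortedSets Sfam i) ((i.1 + 1) * t)}

section SCaux

variable {m : ℕ}

/-- Position of a vertex on the path `s, v_{l 0}, …, v_{l (L-1)}, z`. -/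
def scPos (l : List (Fin m)) : (Fin m ⊕ Bool) → ℕ
  | Sum.inr false => 0
  | Sum.inr true => l.length + 1
  | Sum.inl j => l.idxOf j + 1

lemma length_pathEdges (l : List (Fin m)) (θ : ℕ) :
    (pathEdges l θ).length = l.length + 1 := by
  simp [pathEdges]

lemma getElem_pathEdges (l : List (Fin m)) (θ : ℕ) (k : ℕ)
    (h : k < (pathEdges l θ).length) :
    (pathEdges l θ)[k] =
      ((Sum.inr false :: l.map Sum.inl)[k]'
          (by rw [length_pathEdges] at h; simpa using h),
       (l.map Sum.inl ++ [Sum.inr true])[k]'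
          (by rw [length_pathEdges] at h; simpa using h), θ) := by
  simp [pathEdges, List.getElem_zipWith]

lemma scPos_left (l : List (Fin m)) (nd : l.Nodup) (k : ℕ)
    (hk : k < (Sum.inr false :: l.map Sum.inl).length) :
    scPos l ((Sum.inr false :: l.map Sum.inl)[k]) = k := by
  match k with
  | 0 => simp [scPos]
  | k + 1 =>
    have hk' : k < l.length := by simpa using hk
    have : (Sum.inr false :: l.map Sum.inl)[k+1] = Sum.inl (l[k]'hk') := by simp
    rw [this]
    simp [scPos, List.Nodup.idxOf_getElem nd k hk']

lemma scPos_right (l : List (Fin m)) (nd : l.Nodup) (k : ℕ)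
    (hk : k < (l.map Sum.inl ++ [Sum.inr true]).length) :
    scPos l ((l.map Sum.inl ++ [Sum.inr true])[k]) = k + 1 := by
  have hk2 : k < l.length + 1 := by simpa using hk
  by_cases h : k < l.length
  · have : (l.map Sum.inl ++ [Sum.inr true])[k] = Sum.inl (l[k]'h) := by
      rw [List.getElem_append_left (by simpa using h)]; simp
    rw [this]
    simp [scPos, List.Nodup.idxOf_getElem nd k h]
  · have hkL : k = l.length := by omega
    have : (l.map Sum.inl ++ [Sum.inr true])[k] = Sum.inr true := by
      rw [List.getElem_append_right (by simp [hkL])]; simp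
    rw [this, hkL]; simp [scPos]

lemma edge_props (l : List (Fin m)) (nd : l.Nodup) (θ : ℕ)
    (e : (Fin m ⊕ Bool) × (Fin m ⊕ Bool) × ℕ) (he : e ∈ pathEdges l θ) :
    scPos l e.2.1 = scPos l e.1 + 1 ∧ e.2.2 = θ ∧
      (e.1 = Sum.inr false ∨ ∃ j ∈ l, e.1 = Sum.inl j) ∧
      (e.2.1 = Sum.inr true ∨ ∃ j ∈ l, e.2.1 = Sum.inl j) := by
  rw [List.mem_iff_getElem] at he
  obtain ⟨k, hk, hke⟩ := he
  have hk1 : k < l.length + 1 := by rw [length_pathEdges] at hk; exact hk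
  rw [getElem_pathEdges l θ k hk] at hke
  subst hke
  refine ⟨?_, rfl, ?_, ?_⟩
  · simp only
    rw [scPos_left l nd k (by simpa using hk1), scPos_right l nd k (by simpa using hk1)]
  · match k with
    | 0 => left; simp
    | k + 1 =>
      right
      have hk' : k < l.length := by omega
      exact ⟨l[k]'hk', List.getElem_mem _, by simp⟩
  · by_cases h : k < l.length
    · right
      refine ⟨l[k]'h, List.getElem_mem _, ?_⟩
      show (l.map Sum.inl ++ [Sum.inr true])[k]'_ = _
      rw [List.getElem_append_left (by simpa using h)]; simp
    · left
      have hkL : k = l.length := by omega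
      show (l.map Sum.inl ++ [Sum.inr true])[k]'_ = _
      rw [List.getElem_append_right (by simp [hkL])]; simp

/-- Discrete intermediate value theorem for ±1 walks. -/
lemma scIVT : ∀ (xs : List ℕ), xs.Chain' (fun a b => b = a + 1 ∨ a = b + 1) →
    ∀ r a b, xs.head? = some a → xs.getLast? = some b → a ≤ r → r ≤ b → r ∈ xs
  | [], _, r, a, b, ha, _, _, _ => by simp at ha
  | [x], _, r, a, b, ha, hb, h1, h2 => by
    simp only [List.head?_cons, Option.some.injEq] at ha
    simp only [List.getLast?_singleton, Option.some.injEq] at hb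
    have : r = x := by omega
    simp [this]
  | x :: y :: xs, hc, r, a, b, ha, hb, h1, h2 => by
    simp only [List.head?_cons, Option.some.injEq] at ha
    subst ha
    rcases List.isChain_cons_cons.mp hc with ⟨hxy, hc'⟩
    by_cases hxr : x = r
    · exact hxr ▸ List.mem_cons_self
    · have hy : y ≤ r := by omega
      rw [List.getLast?_cons_cons] at hb
      exact List.mem_cons_of_mem _ (scIVT (y :: xs) hc' r y b rfl hb hy h2)

lemma scBounds : ∀ (xs : List ℕ), xs.Chain' (· ≤ ·) →
    ∀ a b, xs.head? = some a → xs.getLast? = some b → ∀ c ∈ xs, a ≤ c ∧ c ≤ b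
  | [], _, a, b, ha, _ => by simp at ha
  | [x], _, a, b, ha, hb => by
    simp only [List.head?_cons, Option.some.injEq] at ha
    simp only [List.getLast?_singleton, Option.some.injEq] at hb
    subst ha; subst hb
    intro c hc; simp only [List.mem_singleton] at hc; omega
  | x :: y :: xs, hc, a, b, ha, hb => by
    simp only [List.head?_cons, Option.some.injEq] at ha
    subst ha
    rcases List.isChain_cons_cons.mp hc with ⟨hxy, hc'⟩
    rw [List.getLast?_cons_cons] at hb
    have ih := scBounds (y :: xs) hc' y b rfl hb
    intro c hc''
    rcases List.mem_cons.mp hc'' with h | h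
    · subst h
      have := (ih y (List.mem_cons_self)).2
      exact ⟨le_refl _, le_trans hxy this⟩
    · have := ih c h
      exact ⟨le_trans hxy this.1, this.2⟩

lemma mem_sortedSets {n : ℕ} (Sfam : Fin m → Finset (Fin n)) (i : Fin n) (j : Fin m) :
    j ∈ sortedSets Sfam i ↔ i ∈ Sfam j := by
  simp [sortedSets]

end SCaux

theorem stmt3 (n m t : ℕ) (ht : 1 ≤ t) (Sfam : Fin m → Finset (Fin n))
    (hcov : ∀ i : Fin n, ∃ j, i ∈ Sfam j) (J : Finset (Fin m)) :
    IsTempSepT (scE n m t Sfam) (Sum.inr false) (Sum.inr true) t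
        {a | ∃ j ∈ J, a = Sum.inl j} ↔
      ∀ i : Fin n, ∃ j ∈ J, i ∈ Sfam j := by
  constructor
  · rintro ⟨hs, hz, hsep⟩ i
    set l := sortedSets Sfam i with hldef
    set θ := (i.1 + 1) * t with hθdef
    have hnd : l.Nodup := Finset.sort_nodup _ _
    have hlen : (pathEdges l θ).length = l.length + 1 := length_pathEdges l θ
    have hne : pathEdges l θ ≠ [] := by
      intro h; rw [h] at hlen; simp at hlen
    have h0 : (0:ℕ) < (pathEdges l θ).length := by omega
    have hL : (pathEdges l θ).length - 1 < (pathEdges l θ).length := by omega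
    have hPath : IsTempPath (scE n m t Sfam) (Sum.inr false) (Sum.inr true)
        (pathEdges l θ) := by
      refine ⟨hne, ?_, ?_, ?_, ?_⟩
      · intro e he
        exact Set.mem_union_left _ ⟨i, he⟩
      · intro e he
        rw [List.head?_eq_getElem?, List.getElem?_eq_getElem h0] at he
        injection he with he
        rw [← he, getElem_pathEdges l θ 0 h0]
        rfl
      · intro e he
        rw [List.getLast?_eq_getElem?, List.getElem?_eq_getElem hL] at he
        injection he with he
        rw [← he, getElem_pathEdges l θ _ hL]
        show (l.map Sum.inl ++ [Sum.inr true])[(pathEdges l θ).length - 1]'_ = _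
        rw [List.getElem_append_right (by simp [hlen])]
        simp
      · refine List.isChain_iff_getElem.mpr ?_
        intro k hk
        rw [hlen] at hk
        replace hk : k < l.length := by omega
        rw [getElem_pathEdges l θ k (by omega), getElem_pathEdges l θ (k+1) (by omega)]
        refine ⟨?_, le_refl _⟩
        show (l.map Sum.inl ++ [Sum.inr true])[k]'_ = (Sum.inr false :: l.map Sum.inl)[k+1]'_
        rw [List.getElem_append_left (by simpa using hk)]
        simp
    have htt : ttime (pathEdges l θ) ≤ t := by
      unfold ttime
      rw [List.head?_eq_getElem?, List.getLast?_eq_getElem?,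
          List.getElem?_eq_getElem h0, List.getElem?_eq_getElem hL,
          getElem_pathEdges l θ 0 h0, getElem_pathEdges l θ _ hL]
      simpa using ht
    have hnA := hsep _ hPath htt
    obtain ⟨e, he, hS⟩ : ∃ e ∈ pathEdges l θ,
        e.1 ∈ {a | ∃ j ∈ J, a = Sum.inl j} ∨ e.2.1 ∈ {a | ∃ j ∈ J, a = Sum.inl j} := by
      by_contra hcon
      push_neg at hcon
      exact hnA fun e he => hcon e he
    obtain ⟨_, _, hv1, hv2⟩ := edge_props l hnd θ e he
    rcases hS with h | h
    · obtain ⟨j', hj'J, hj'⟩ := h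
      rcases hv1 with h0' | ⟨j, hjl, hj⟩
      · rw [h0'] at hj'; simp at hj'
      · rw [hj] at hj'
        have hjj : j = j' := by simpa using hj'
        exact ⟨j', hj'J, (mem_sortedSets Sfam i j').1 (hjj ▸ hjl)⟩
    · obtain ⟨j', hj'J, hj'⟩ := h
      rcases hv2 with h0' | ⟨j, hjl, hj⟩
      · rw [h0'] at hj'; simp at hj'
      · rw [hj] at hj'
        have hjj : j = j' := by simpa using hj'
        exact ⟨j', hj'J, (mem_sortedSets Sfam i j').1 (hjj ▸ hjl)⟩
  · intro hcov'
    refine ⟨by simp, by simp, ?_⟩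
    intro P hP htt hAv
    obtain ⟨hne, hE, hhead, hlast, hchain⟩ := hP
    set e₀ := P.head hne with he₀
    set e₁ := P.getLast hne with he₁
    have hh : P.head? = some e₀ := List.head?_eq_head hne
    have hl : P.getLast? = some e₁ := List.getLast?_eq_getLast hne
    have hts : List.Chain' (· ≤ ·) (P.map (fun e => e.2.2)) :=
      List.isChain_map_of_isChain _ (fun a b h => h.2) hchain
    have hbnd : ∀ e ∈ P, e₀.2.2 ≤ e.2.2 ∧ e.2.2 ≤ e₁.2.2 := by
      intro e he
      exact scBounds _ hts _ _ (by rw [List.head?_map, hh]; rfl)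
        (by rw [List.getLast?_map, hl]; rfl) _ (List.mem_map_of_mem he)
    have httP : ttime P = e₁.2.2 + 1 - e₀.2.2 := by
      unfold ttime; rw [hh, hl]; rfl
    rw [httP] at htt
    have hdec : ∀ e ∈ P, ∃ i : Fin n, e.2.2 = (i.1 + 1) * t ∧
        (e ∈ pathEdges (sortedSets Sfam i) ((i.1+1)*t) ∨
         (e.2.1, e.1, e.2.2) ∈ pathEdges (sortedSets Sfam i) ((i.1+1)*t)) := by
      intro e he
      have hmem := hE e he
      simp only [scE, Esym, Set.mem_union, Set.mem_setOf_eq] at hmem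
      rcases hmem with ⟨i, hi⟩ | ⟨i, hi⟩
      · exact ⟨i, (edge_props _ (Finset.sort_nodup _ _) _ _ hi).2.1, Or.inl hi⟩
      · exact ⟨i, (edge_props _ (Finset.sort_nodup _ _) _ _ hi).2.1, Or.inr hi⟩
    obtain ⟨i₀, hi0t, hi0⟩ := hdec e₀ (List.head_mem hne)
    set l := sortedSets Sfam i₀ with hldef
    set θ := (i₀.1 + 1) * t with hθdef
    have hnd : l.Nodup := Finset.sort_nodup _ _
    have hb1 : e₀.2.2 ≤ e₁.2.2 := (hbnd e₁ (List.getLast_mem hne)).1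
    have hbt : e₁.2.2 < e₀.2.2 + t := by omega
    have hsame : ∀ e ∈ P, e ∈ pathEdges l θ ∨ (e.2.1, e.1, e.2.2) ∈ pathEdges l θ := by
      intro e he
      obtain ⟨i, hit, hi⟩ := hdec e he
      have hbe := hbnd e he
      have hii : i = i₀ := by
        have h1 : (i₀.1+1)*t ≤ (i.1+1)*t := by
          rw [← hit, ← hθdef, ← hi0t]; exact hbe.1
        have h2 : (i.1+1)*t < (i₀.1+2)*t := by
          rw [← hit]
          calc e.2.2 ≤ e₁.2.2 := hbe.2
          _ < e₀.2.2 + t := hbt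
          _ = (i₀.1+2)*t := by rw [hi0t, hθdef]; ring
        have hA := Nat.le_of_mul_le_mul_right h1 (by omega)
        have hB := Nat.lt_of_mul_lt_mul_right h2
        exact Fin.ext (by omega)
      rw [hii] at hi
      exact hi
    have hstep : ∀ e ∈ P, scPos l e.2.1 = scPos l e.1 + 1 ∨
        scPos l e.1 = scPos l e.2.1 + 1 := by
      intro e he
      rcases hsame e he with h | h
      · exact Or.inl (edge_props l hnd θ e h).1
      · exact Or.inr (edge_props l hnd θ _ h).1
    set vs := e₀.1 :: P.map (fun e => e.2.1) with hvs
    have hPk : ∀ j (hj : j < P.length),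
        vs[j+1]'(by simp [hvs]; omega) = (P[j]'hj).2.1 := by
      intro j hj; simp [hvs]
    have hchainget := List.isChain_iff_getElem.mp hchain
    have hvchain : List.Chain' (fun x y => ∃ e ∈ P, x = e.1 ∧ y = e.2.1) vs := by
      refine List.isChain_iff_getElem.mpr ?_
      intro k hk
      have hk' : k < P.length := by simpa [hvs] using hk
      match k with
      | 0 =>
        refine ⟨P[0]'hk', List.getElem_mem _, ?_, ?_⟩
        · show vs.get ⟨0, by simp [hvs]⟩ = _
          simp [hvs, he₀, List.head_eq_getElem]
        · rw [hPk 0 hk']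
      | k + 1 =>
        have hkk : k < P.length - 1 := by omega
        refine ⟨P[k+1]'hk', List.getElem_mem _, ?_, ?_⟩
        · rw [hPk k (by omega)]
          have := hchainget k (by omega)
          exact this.1
        · rw [hPk (k+1) hk']
    have hxchain : List.Chain' (fun a b => b = a + 1 ∨ a = b + 1) (vs.map (scPos l)) :=
      List.isChain_map_of_isChain _ (fun x y h => by
        obtain ⟨e, he, hx, hy⟩ := h
        subst hx; subst hy
        exact hstep e he) hvchain
    obtain ⟨q, P', hq⟩ := List.exists_cons_of_ne_nil hne
    have hvlast : vs.getLast? = some e₁.2.1 := by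
      have h5 : vs.getLast? = (P.map (fun e => e.2.1)).getLast? := by
        rw [hvs, hq, List.map_cons, List.getLast?_cons_cons]
      rw [h5, List.getLast?_map, hl]
      rfl
    obtain ⟨j, hjJ, hij⟩ := hcov' i₀
    have hjl : j ∈ l := (mem_sortedSets Sfam i₀ j).2 hij
    have hidx : l.idxOf j < l.length := List.idxOf_lt_length_iff.2 hjl
    have hr : (l.idxOf j + 1) ∈ vs.map (scPos l) := by
      apply scIVT _ hxchain _ (scPos l e₀.1) (scPos l e₁.2.1)
      · rw [hvs]; rfl
      · rw [List.getLast?_map, hvlast]; rfl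
      · rw [hhead e₀ hh]; simp [scPos]
      · rw [hlast e₁ hl]; simp only [scPos]; omega
    obtain ⟨x, hxvs, hxpos⟩ := List.mem_map.mp hr
    have hxj : x = Sum.inl j := by
      match x with
      | Sum.inr false => simp [scPos] at hxpos
      | Sum.inr true =>
        simp only [scPos] at hxpos
        omega
      | Sum.inl j' =>
        simp only [scPos] at hxpos
        have h1 : l.idxOf j' = l.idxOf j := by omega
        have h2 : l.idxOf j' < l.length := h1 ▸ hidx
        have h3 : l[l.idxOf j'] = j' := List.getElem_idxOf h2
        have h4 : l[l.idxOf j] = j := List.getElem_idxOf hidx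
        simp only [h1] at h3
        exact congrArg Sum.inl (h3.symm.trans h4)
    subst hxj
    rcases List.mem_cons.mp hxvs with h | h
    · exact (hAv e₀ (List.head_mem hne)).1 ⟨j, hjJ, h.symm⟩
    · obtain ⟨e, he, hfe⟩ := List.mem_map.mp h
      exact (hAv e he).2 ⟨j, hjJ, hfe⟩
end

section
/- Let G be a connected graph with a branch decomposition (T, β) of width at most 2 with root ρ, and suppose s, z ∈ V(G) satisfy top(s) = top(z) = x. Then x = ρ, and moreover ∂β(x_ℓ) = ∂β(x_r) = {s, z} and ∂β(x) = ∅. -/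
/-- Binary trees whose leaves are labelled by `α`. -/
inductive BTree (α : Type) : Type
  | leaf : α → BTree α
  | node : BTree α → BTree α → BTree α

namespace BTree

def leaves {α : Type} : BTree α → List α
  | leaf a => [a]
  | node l r => leaves l ++ leaves r

/-- The set of leaf labels (edges) of a subtree. -/
def edges {α : Type} (T : BTree α) : Set α := {a | a ∈ T.leaves}

/-- The subtree of `T` at position `p` (a list of left/right moves from the root). -/
def sub {α : Type} : BTree α → List Bool → Option (BTree α)
  | T, [] => some T
  | leaf _, _ :: _ => none
  | node l _, false :: p => sub l p
  | node _ r, true :: p => sub r p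

end BTree

/-- `T` is a branch decomposition of the edge set `E`: its leaves are pairwise
distinct and enumerate exactly `E`. -/
def IsBranchDecomp {α : Type} (E : Set α) (T : BTree α) : Prop :=
  T.leaves.Nodup ∧ {a | a ∈ T.leaves} = E

/-- The boundary of an edge set `F` inside the edge set `E` of a graph on `V`. -/
def bdry {V : Type} (E F : Set (Sym2 V)) : Set V :=
  {v | (∃ e ∈ F, v ∈ e) ∧ ∃ e ∈ E \ F, v ∈ e}

lemma BTree.sub_append {α : Type} (p q : List Bool) : ∀ (T : BTree α),
    T.sub (p ++ q) = (T.sub p).bind (fun y => y.sub q) := by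
  induction p with
  | nil => intro T; simp [BTree.sub]
  | cons b p ih =>
    intro T
    cases T with
    | leaf a => cases b <;> simp [BTree.sub]
    | node l r => cases b <;> simp [BTree.sub, ih]

lemma BTree.leaves_ne_nil {α : Type} (T : BTree α) : T.leaves ≠ [] := by
  induction T with
  | leaf a => simp [BTree.leaves]
  | node l r ihl ihr => simp [BTree.leaves, ihl]

lemma BTree.sub_leaves_sublist {α : Type} : ∀ (p : List Bool) (T y : BTree α),
    T.sub p = some y → y.leaves.Sublist T.leaves := by
  intro p
  induction p with
  | nil =>
    intro T y h
    simp [BTree.sub] at h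
    subst h
    exact List.Sublist.refl _
  | cons b p ih =>
    intro T y h
    cases T with
    | leaf a => cases b <;> simp [BTree.sub] at h
    | node l r =>
      cases b with
      | false =>
        simp only [BTree.sub] at h
        exact (ih l y h).trans (List.sublist_append_left _ _)
      | true =>
        simp only [BTree.sub] at h
        exact (ih r y h).trans (List.sublist_append_right _ _)

lemma walkProp {V : Type} {G : SimpleGraph V} {P : V → Prop}
    (h : ∀ a b, G.Adj a b → P a → P b) :
    ∀ {a w : V}, G.Walk a w → P a → P w
  | _, _, .nil, ha => ha
  | _, _, .cons hadj q, ha => walkProp h q (h _ _ hadj ha)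

lemma bdry_nonempty {V : Type} {G : SimpleGraph V} (hconn : G.Connected)
    {F : Set (Sym2 V)} {e e' : Sym2 V} (heF : e ∈ F) (heE : e ∈ G.edgeSet)
    (he'E : e' ∈ G.edgeSet) (he'F : e' ∉ F) : (bdry G.edgeSet F).Nonempty := by
  by_contra hne
  rw [Set.not_nonempty_iff_eq_empty] at hne
  set P : V → Prop := fun v => ∃ f ∈ F, v ∈ f with hP
  have hstep : ∀ a b, G.Adj a b → P a → P b := by
    intro a b hadj hPa
    by_cases hab : s(a, b) ∈ F
    · exact ⟨s(a, b), hab, Sym2.mem_mk_right a b⟩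
    · exfalso
      have : a ∈ bdry G.edgeSet F :=
        ⟨hPa, ⟨s(a, b), ⟨G.mem_edgeSet.2 hadj, hab⟩, Sym2.mem_mk_left a b⟩⟩
      rw [hne] at this
      exact this
  induction e using Sym2.ind with
  | _ a b =>
    induction e' using Sym2.ind with
    | _ c d =>
      have hPa : P a := ⟨s(a, b), heF, Sym2.mem_mk_left a b⟩
      obtain ⟨w⟩ := hconn a c
      have hPc : P c := walkProp hstep w hPa
      have : c ∈ bdry G.edgeSet F := ⟨hPc, ⟨s(c, d), ⟨he'E, he'F⟩, Sym2.mem_mk_left c d⟩⟩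
      rw [hne] at this
      exact this

theorem stmt7 {V : Type} [Fintype V] [DecidableEq V] (G : SimpleGraph V)
    (hconn : G.Connected) (T : BTree (Sym2 V))
    (hT : IsBranchDecomp G.edgeSet T)
    (hwidth : ∀ (q : List Bool) (y : BTree (Sym2 V)), T.sub q = some y →
      (bdry G.edgeSet y.edges).ncard ≤ 2)
    (s z : V) (hsz : s ≠ z) (p : List Bool) (l r : BTree (Sym2 V))
    (hx : T.sub p = some (BTree.node l r))
    (htopS1 : {e ∈ G.edgeSet | s ∈ e} ⊆ (BTree.node l r).edges)
    (htopS2 : ∀ (q : List Bool) (y : BTree (Sym2 V)), T.sub q = some y →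
      p.length < q.length → ¬ {e ∈ G.edgeSet | s ∈ e} ⊆ y.edges)
    (htopZ1 : {e ∈ G.edgeSet | z ∈ e} ⊆ (BTree.node l r).edges)
    (htopZ2 : ∀ (q : List Bool) (y : BTree (Sym2 V)), T.sub q = some y →
      p.length < q.length → ¬ {e ∈ G.edgeSet | z ∈ e} ⊆ y.edges) :
    p = [] ∧ bdry G.edgeSet l.edges = {s, z} ∧ bdry G.edgeSet r.edges = {s, z} ∧
      bdry G.edgeSet (BTree.node l r).edges = ∅ := by
  -- subtrees at children positions
  have hsubL : T.sub (p ++ [false]) = some l := by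
    rw [BTree.sub_append, hx]; simp [BTree.sub]
  have hsubR : T.sub (p ++ [true]) = some r := by
    rw [BTree.sub_append, hx]; simp [BTree.sub]
  have hlenL : p.length < (p ++ [false]).length := by simp
  have hlenR : p.length < (p ++ [true]).length := by simp
  -- node edges = union
  have node_edges : (BTree.node l r).edges = l.edges ∪ r.edges := by
    ext a; simp [BTree.edges, BTree.leaves]
  -- nodup of node leaves
  have hxsub := BTree.sub_leaves_sublist p T _ hx
  have hnd : (BTree.node l r).leaves.Nodup := hxsub.nodup hT.1
  have hdisj : ∀ a ∈ l.leaves, a ∉ r.leaves := by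
    have := (List.nodup_append.1 hnd).2.2
    intro a ha har; exact this a ha a har rfl
  -- all leaves are edges of G
  have hE : ∀ a ∈ (BTree.node l r).leaves, a ∈ G.edgeSet := by
    intro a ha
    rw [← hT.2]
    exact hxsub.subset ha
  -- s has an incident edge in each side
  have key : ∀ v : V, ({e ∈ G.edgeSet | v ∈ e} ⊆ (BTree.node l r).edges) →
      (∀ (q : List Bool) (y : BTree (Sym2 V)), T.sub q = some y →
        p.length < q.length → ¬ {e ∈ G.edgeSet | v ∈ e} ⊆ y.edges) →
      v ∈ bdry G.edgeSet l.edges ∧ v ∈ bdry G.edgeSet r.edges := by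
    intro v htop1 htop2
    obtain ⟨er, her, herL⟩ := Set.not_subset.1 (htop2 _ l hsubL hlenL)
    obtain ⟨el, hel, helR⟩ := Set.not_subset.1 (htop2 _ r hsubR hlenR)
    have herR : er ∈ r.edges := by
      have := htop1 her
      rw [node_edges] at this
      exact this.resolve_left herL
    have helL : el ∈ l.edges := by
      have := htop1 hel
      rw [node_edges] at this
      exact this.resolve_right helR
    constructor
    · exact ⟨⟨el, helL, hel.2⟩, ⟨er, ⟨her.1, herL⟩, her.2⟩⟩
    · exact ⟨⟨er, herR, her.2⟩, ⟨el, ⟨hel.1, helR⟩, hel.2⟩⟩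
  obtain ⟨hsl, hsr⟩ := key s htopS1 htopS2
  obtain ⟨hzl, hzr⟩ := key z htopZ1 htopZ2
  have hpair : ∀ F : Set (Sym2 V), s ∈ bdry G.edgeSet F → z ∈ bdry G.edgeSet F →
      (bdry G.edgeSet F).ncard ≤ 2 → bdry G.edgeSet F = {s, z} := by
    intro F hs hz hcard
    symm
    apply Set.eq_of_subset_of_ncard_le
    · intro v hv
      rcases hv with h | h
      · rwa [h]
      · rw [Set.mem_singleton_iff] at h; rwa [h]
    · rw [Set.ncard_pair hsz]; exact hcard
    · exact Set.toFinite _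
  have hbl : bdry G.edgeSet l.edges = {s, z} := hpair _ hsl hzl (hwidth _ l hsubL)
  have hbr : bdry G.edgeSet r.edges = {s, z} := hpair _ hsr hzr (hwidth _ r hsubR)
  have hbx : bdry G.edgeSet (BTree.node l r).edges = ∅ := by
    ext v
    simp only [Set.mem_empty_iff_false, iff_false]
    rintro ⟨⟨e, heF, hve⟩, ⟨e'', ⟨he''E, he''F⟩, hve''⟩⟩
    rw [node_edges] at heF he''F
    have hvsz : v = s ∨ v = z := by
      rcases heF with h | h
      · have : v ∈ bdry G.edgeSet l.edges :=
          ⟨⟨e, h, hve⟩, ⟨e'', ⟨he''E, fun hc => he''F (Or.inl hc)⟩, hve''⟩⟩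
        rw [hbl] at this
        simpa using this
      · have : v ∈ bdry G.edgeSet r.edges :=
          ⟨⟨e, h, hve⟩, ⟨e'', ⟨he''E, fun hc => he''F (Or.inr hc)⟩, hve''⟩⟩
        rw [hbr] at this
        simpa using this
    rcases hvsz with rfl | rfl
    · have : e'' ∈ (BTree.node l r).edges := htopS1 ⟨he''E, hve''⟩
      rw [node_edges] at this
      exact he''F this
    · have : e'' ∈ (BTree.node l r).edges := htopZ1 ⟨he''E, hve''⟩
      rw [node_edges] at this
      exact he''F this
  refine ⟨?_, hbl, hbr, hbx⟩
  -- p = []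
  cases p with
  | nil => rfl
  | cons b p' =>
    exfalso
    cases T with
    | leaf a => cases b <;> simp [BTree.sub] at hx
    | node L R =>
      -- get an edge outside x.edges and an edge inside
      obtain ⟨e0, he0⟩ := List.exists_mem_of_ne_nil _ (BTree.leaves_ne_nil (BTree.node l r))
      have he0F : e0 ∈ (BTree.node l r).edges := he0
      have he0E : e0 ∈ G.edgeSet := hE e0 he0
      have hTd : ∀ a ∈ L.leaves, a ∉ R.leaves := by
        have := (List.nodup_append.1 hT.1).2.2
        intro a ha har; exact this a ha a har rfl
      have hout : ∃ e', e' ∈ G.edgeSet ∧ e' ∉ (BTree.node l r).edges := by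
        cases b with
        | false =>
          simp only [BTree.sub] at hx
          have hsubl := BTree.sub_leaves_sublist p' L _ hx
          obtain ⟨a', ha'⟩ := List.exists_mem_of_ne_nil _ (BTree.leaves_ne_nil R)
          refine ⟨a', ?_, ?_⟩
          · rw [← hT.2]; simp [BTree.leaves]; right; exact ha'
          · intro hc
            exact hTd a' (hsubl.subset hc) ha'
        | true =>
          simp only [BTree.sub] at hx
          have hsubl := BTree.sub_leaves_sublist p' R _ hx
          obtain ⟨a', ha'⟩ := List.exists_mem_of_ne_nil _ (BTree.leaves_ne_nil L)
          refine ⟨a', ?_, ?_⟩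
          · rw [← hT.2]; simp [BTree.leaves]; left; exact ha'
          · intro hc
            exact hTd a' ha' (hsubl.subset hc)
      obtain ⟨e', he'E, he'F⟩ := hout
      have := bdry_nonempty hconn he0F he0E he'E he'F
      rw [hbx] at this
      exact Set.not_nonempty_empty this
end

section
/- Let G be a graph with branch decomposition (T, β), let x be an internal node with children x_ℓ, x_r such that ∂β(x_ℓ) = ∂β(x_r) = {s, z}. Then any path P in G from s to z whose internal vertices avoid s and z uses edges only from β(x_ℓ) or only from β(x_r); i.e., P cannot contain edges from both β(x_ℓ) and β(x_r). -/
theorem stmt8 {V : Type} (G : SimpleGraph V) (s z : V)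
    (l r : BTree (Sym2 V))
    (hT : IsBranchDecomp G.edgeSet (BTree.node l r))
    (hbl : bdry G.edgeSet l.edges = {s, z})
    (hbr : bdry G.edgeSet r.edges = {s, z})
    (P : G.Walk s z) (hP : P.IsPath) :
    (∀ e ∈ P.edges, e ∈ l.edges) ∨ (∀ e ∈ P.edges, e ∈ r.edges) := by
  classical
  obtain ⟨hnd, hE⟩ := hT
  have hdisj : ∀ e, e ∈ l.edges → e ∈ r.edges → False := by
    intro e hl hr
    simp only [BTree.leaves] at hnd
    exact (List.disjoint_of_nodup_append hnd) hl hr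
  have hunion : ∀ e, e ∈ G.edgeSet → e ∈ l.edges ∨ e ∈ r.edges := by
    intro e he
    rw [← hE] at he
    simpa [BTree.leaves, BTree.edges] using he
  have hsubR : ∀ e, e ∈ r.edges → e ∈ G.edgeSet := by
    intro e he
    rw [← hE]
    simp only [BTree.edges, Set.mem_setOf_eq, BTree.leaves, List.mem_append] at he ⊢
    exact Or.inr he
  have hbd : ∀ (v : V) (e f : Sym2 V), e ∈ l.edges → f ∈ r.edges → v ∈ e → v ∈ f →
      v = s ∨ v = z := by
    intro v e f hel hfr hve hvf
    have hv : v ∈ bdry G.edgeSet l.edges :=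
      ⟨⟨e, hel, hve⟩, ⟨f, ⟨hsubR f hfr, fun hfl => hdisj f hfl hfr⟩, hvf⟩⟩
    rw [hbl] at hv
    simpa using hv
  suffices h : ∀ (a w : V) (W : G.Walk a w), W.IsPath → s ∉ W.support.tail →
      (∀ (v : V) (e f : Sym2 V), e ∈ l.edges → f ∈ r.edges → v ∈ e → v ∈ f →
        v = s ∨ v = w) →
      (∀ e ∈ W.edges, e ∈ l.edges) ∨ (∀ e ∈ W.edges, e ∈ r.edges) by
    refine h s z P hP ?_ hbd
    have h2 := hP.support_nodup
    rw [P.support_eq_cons, List.nodup_cons] at h2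
    exact h2.1
  intro a w W
  induction W with
  | nil => intro _ _ _; left; simp
  | @cons a b w hab p ih =>
    intro hpath hs hbdw
    have hs' : s ∉ p.support := by simpa using hs
    have ihr := ih hpath.of_cons (fun hmem => hs' (List.mem_of_mem_tail hmem)) hbdw
    have he0 : s(a, b) ∈ G.edgeSet := hab
    cases p with
    | nil =>
      rcases hunion _ he0 with h1 | h1
      · left; intro e he; simp only [SimpleGraph.Walk.edges_cons,
          SimpleGraph.Walk.edges_nil, List.mem_singleton] at he; subst he; exact h1
      · right; intro e he; simp only [SimpleGraph.Walk.edges_cons,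
          SimpleGraph.Walk.edges_nil, List.mem_singleton] at he; subst he; exact h1
    | @cons b c w hbc q =>
      have hbne : b ≠ w := by
        have hnd2 := hpath.of_cons.support_nodup
        simp only [SimpleGraph.Walk.support_cons, List.nodup_cons] at hnd2
        intro hbz; subst hbz
        exact hnd2.1 q.end_mem_support
      have hbns : b ≠ s := by
        intro hbs; subst hbs; exact hs' (SimpleGraph.Walk.start_mem_support _)
      have hf : s(b, c) ∈ (SimpleGraph.Walk.cons hbc q).edges := by simp
      rcases hunion _ he0 with h1 | h1
      · rcases ihr with h2 | h2
        · left; intro e he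
          simp only [SimpleGraph.Walk.edges_cons, List.mem_cons] at he
          rcases he with he | he
          · subst he; exact h1
          · exact h2 e (by simpa using he)
        · exfalso
          have hfr := h2 _ hf
          rcases hbdw b s(a,b) s(b,c) h1 hfr (by simp) (by simp) with h | h
          · exact hbns h
          · exact hbne h
      · rcases ihr with h2 | h2
        · exfalso
          have hfl := h2 _ hf
          rcases hbdw b s(b,c) s(a,b) hfl h1 (by simp) (by simp) with h | h
          · exact hbns h
          · exact hbne h
        · right; intro e he
          simp only [SimpleGraph.Walk.edges_cons, List.mem_cons] at he
          rcases he with he | he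
          · subst he; exact h1
          · exact h2 e (by simpa using he)
end

section
/- Let T be a rooted tree and suppose each vertex v of T has a finite set RL_v of 'pairs' such that the following convexity property holds: for every pair p and all vertices u, v on a path in T, if p ∈ RL_u and p ∈ RL_v then p ∈ RL_w for every w on the tree path between u and v (in particular the set of vertices containing p forms a subtree/path). Consider the greedy algorithm that repeatedly selects a deepest vertex v such that RL_v ⊄ RL_{parent(v)} (i.e., v is 'topmost' for some uncovered pair), adds v to the solution, and removes all pairs of RL_v from all lists; the algorithm stops when all lists are empty. Then the greedy algorithm outputs a minimum-cardinality set S of vertices with ∪_{v∈S} RL_v = ∪_{v∈V(T)} RL_v. -/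
/-- `a` is an ancestor of `v` in the rooted tree given by `parent`. -/
def Anc {V : Type} (parent : V → V) (a v : V) : Prop := ∃ k, parent^[k] v = a

/-- `w` lies on the tree path between `u` and `v`. -/
def OnPath {V : Type} (parent : V → V) (u v w : V) : Prop :=
  (Anc parent w u ∨ Anc parent w v) ∧
    ∀ a, Anc parent a u → Anc parent a v → Anc parent a w

/-- `IsGreedyRun parent depth RL U run` says that `run` is a possible execution of the
greedy algorithm starting from the set `U` of uncovered pairs: at each step a deepest
vertex `v` that is topmost for some uncovered pair (i.e. some uncovered pair is in
`RL v` but not in `RL (parent v)`) is chosen, and the pairs of `RL v` are removed;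
the run ends exactly when no pair remains. -/
def IsGreedyRun {V P : Type} [DecidableEq P] (parent : V → V) (depth : V → ℕ)
    (RL : V → Finset P) : Finset P → List V → Prop
  | U, [] => U = ∅
  | U, v :: rest =>
      (∃ p ∈ RL v, p ∈ U ∧ p ∉ RL (parent v)) ∧
      (∀ w, (∃ p ∈ RL w, p ∈ U ∧ p ∉ RL (parent w)) → depth w ≤ depth v) ∧
      IsGreedyRun parent depth RL (U \ RL v) rest

section Aux

variable {V P : Type} [DecidableEq P] {parent : V → V} {depth : V → ℕ}

lemma anc_trans {a b c : V} (h1 : Anc parent a b) (h2 : Anc parent b c) :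
    Anc parent a c := by
  obtain ⟨k1, hk1⟩ := h1; obtain ⟨k2, hk2⟩ := h2
  exact ⟨k1 + k2, by rw [Function.iterate_add_apply, hk2, hk1]⟩

lemma anc_total {a b x : V} (h1 : Anc parent a x) (h2 : Anc parent b x) :
    Anc parent a b ∨ Anc parent b a := by
  obtain ⟨k1, hk1⟩ := h1; obtain ⟨k2, hk2⟩ := h2
  rcases le_total k1 k2 with h | h
  · right
    exact ⟨k2 - k1, by rw [← hk1, ← Function.iterate_add_apply,
      Nat.sub_add_cancel h, hk2]⟩
  · left
    exact ⟨k1 - k2, by rw [← hk2, ← Function.iterate_add_apply,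
      Nat.sub_add_cancel h, hk1]⟩

variable {root : V} (hroot : parent root = root)
  (hdepth : ∀ v, v ≠ root → depth (parent v) < depth v)

include hroot hdepth in
lemma depth_parent_le (x : V) : depth (parent x) ≤ depth x := by
  by_cases h : x = root
  · subst h; rw [hroot]
  · exact (hdepth x h).le

include hroot hdepth in
lemma depth_iterate_le (k : ℕ) (x : V) : depth (parent^[k] x) ≤ depth x := by
  induction k with
  | zero => simp
  | succ n ih =>
    rw [Function.iterate_succ_apply']
    exact (depth_parent_le hroot hdepth _).trans ih

include hroot hdepth in
lemma anc_eq {a b : V} (h : Anc parent a b) (hd : depth b ≤ depth a) : a = b := by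
  obtain ⟨k, hk⟩ := h
  cases k with
  | zero => exact hk.symm
  | succ n =>
    by_cases hb : b = root
    · subst hb
      rw [← hk, Function.iterate_fixed hroot]
    · exfalso
      rw [Function.iterate_succ_apply] at hk
      have h1 : depth a ≤ depth (parent b) := hk ▸ depth_iterate_le hroot hdepth n _
      have h2 : depth (parent b) < depth b := hdepth b hb
      omega

include hroot in
lemma anc_root {a : V} (h : Anc parent a root) : a = root := by
  obtain ⟨k, hk⟩ := h
  rw [Function.iterate_fixed hroot] at hk
  exact hk.symm

end Aux

section Key

variable {V P : Type} [DecidableEq P] {parent : V → V} {depth : V → ℕ}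
  {root : V}

/-- The key structural lemma: if `v` is a deepest topmost vertex with witness
pair `p`, then for any vertex `x` whose list contains `p`, every uncovered pair of
`RL x` is already in `RL v`. -/
lemma key_lemma
    (hroot : parent root = root)
    (hdepth : ∀ v, v ≠ root → depth (parent v) < depth v)
    (hanc : ∀ v, Anc parent root v)
    (RL : V → Finset P)
    (hconv : ∀ p u v w, p ∈ RL u → p ∈ RL v → OnPath parent u v w → p ∈ RL w)
    (U : Finset P) (v : V) (p : P)
    (hpv : p ∈ RL v) (hpU : p ∈ U) (hpp : p ∉ RL (parent v))
    (hdeep : ∀ w, (∃ p ∈ RL w, p ∈ U ∧ p ∉ RL (parent w)) → depth w ≤ depth v)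
    (x : V) (hpx : p ∈ RL x) (q : P) (hqU : q ∈ U) (hqx : q ∈ RL x) :
    q ∈ RL v := by
  -- First: v is an ancestor of x.
  have hvx : Anc parent v x := by
    by_contra h
    apply hpp
    apply hconv p v x (parent v) hpv hpx
    constructor
    · left; exact ⟨1, by simp⟩
    · rintro a ⟨k, hk⟩ hax
      cases k with
      | zero =>
        rw [Function.iterate_zero_apply] at hk
        subst hk
        exact absurd hax h
      | succ n =>
        rw [Function.iterate_succ_apply] at hk
        exact ⟨n, hk⟩
  by_contra hqv
  by_cases hqr : q ∈ RL root
  · -- q ∈ RL root: v lies on the path from root to x.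
    apply hqv
    apply hconv q root x v hqr hqx
    refine ⟨Or.inr hvx, fun a har _ => ?_⟩
    have : a = root := anc_root hroot har
    subst this
    exact hanc v
  · -- q ∉ RL root: find the topmost vertex containing q above x.
    obtain ⟨K, hK⟩ := hanc x
    have hex : ∃ k, q ∉ RL (parent^[k] x) := ⟨K, by rw [hK]; exact hqr⟩
    classical
    let k0 := Nat.find hex
    have hk0 : q ∉ RL (parent^[k0] x) := Nat.find_spec hex
    have hk0pos : k0 ≠ 0 := by
      intro h
      rw [h] at hk0
      exact hk0 hqx
    set t := parent^[k0 - 1] x with ht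
    have hqt : q ∈ RL t := by
      have := Nat.find_min hex (m := k0 - 1) (by omega)
      simpa [ht] using not_not.mp this
    have hqpt : q ∉ RL (parent t) := by
      have hk0e : k0 = (k0 - 1) + 1 := by omega
      have : parent t = parent^[k0] x := by
        conv_rhs => rw [hk0e]
        rw [ht, Function.iterate_succ_apply']
      rw [this]
      exact hk0
    have htx : Anc parent t x := ⟨k0 - 1, rfl⟩
    have hdt : depth t ≤ depth v := hdeep t ⟨q, hqt, hqU, hqpt⟩
    have htv : Anc parent t v := by
      rcases anc_total htx hvx with h | h
      · exact h
      · have : v = t := anc_eq hroot hdepth h hdt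
        subst this
        exact ⟨0, rfl⟩
    apply hqv
    apply hconv q t x v hqt hqx
    exact ⟨Or.inr hvx, fun a hat _ => anc_trans hat htv⟩

end Key

section Main

variable {V P : Type} [DecidableEq P] {parent : V → V} {depth : V → ℕ}

lemma greedy_covers (RL : V → Finset P) :
    ∀ (run : List V) (U : Finset P), IsGreedyRun parent depth RL U run →
      ∀ p ∈ U, ∃ v ∈ run, p ∈ RL v := by
  intro run
  induction run with
  | nil =>
    intro U h p hp
    simp only [IsGreedyRun] at h
    subst h
    exact absurd hp (Finset.notMem_empty p)
  | cons v rest ih =>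
    intro U h p hp
    obtain ⟨_, _, h3⟩ := h
    by_cases hpv : p ∈ RL v
    · exact ⟨v, List.mem_cons_self, hpv⟩
    · obtain ⟨w, hw, hpw⟩ := ih _ h3 p (Finset.mem_sdiff.2 ⟨hp, hpv⟩)
      exact ⟨w, List.mem_cons_of_mem v hw, hpw⟩

lemma greedy_optimal {root : V}
    (hroot : parent root = root)
    (hdepth : ∀ v, v ≠ root → depth (parent v) < depth v)
    (hanc : ∀ v, Anc parent root v)
    (RL : V → Finset P)
    (hconv : ∀ p u v w, p ∈ RL u → p ∈ RL v → OnPath parent u v w → p ∈ RL w) :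
    ∀ (run : List V) (U : Finset P) (S : Finset V),
      IsGreedyRun parent depth RL U run →
      (∀ q ∈ U, ∃ s ∈ S, q ∈ RL s) → run.length ≤ S.card := by
  classical
  intro run
  induction run with
  | nil => intro U S _ _; simp
  | cons v rest ih =>
    intro U S hrun hcov
    obtain ⟨⟨p, hpv, hpU, hpp⟩, hdeep, hrest⟩ := hrun
    obtain ⟨s, hsS, hps⟩ := hcov p hpU
    have hkey : ∀ q ∈ U, q ∈ RL s → q ∈ RL v := fun q hqU hqs =>
      key_lemma hroot hdepth hanc RL hconv U v p hpv hpU hpp hdeep s hps q hqU hqs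
    have hcov' : ∀ q ∈ U \ RL v, ∃ s' ∈ S.erase s, q ∈ RL s' := by
      intro q hq
      rw [Finset.mem_sdiff] at hq
      obtain ⟨s', hs', hqs'⟩ := hcov q hq.1
      refine ⟨s', Finset.mem_erase.2 ⟨?_, hs'⟩, hqs'⟩
      rintro rfl
      exact hq.2 (hkey q hq.1 hqs')
    have h1 := ih (U \ RL v) (S.erase s) hrest hcov'
    have h2 : (S.erase s).card = S.card - 1 := Finset.card_erase_of_mem hsS
    have h3 : 0 < S.card := Finset.card_pos.2 ⟨s, hsS⟩
    simp only [List.length_cons]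
    omega

end Main

theorem stmt10 {V P : Type} [Fintype V] [Fintype P] [DecidableEq P]
    (parent : V → V) (root : V) (depth : V → ℕ)
    (hroot : parent root = root)
    (hdepth : ∀ v, v ≠ root → depth (parent v) < depth v)
    (hanc : ∀ v, Anc parent root v)
    (RL : V → Finset P)
    (hconv : ∀ p u v w, p ∈ RL u → p ∈ RL v → OnPath parent u v w → p ∈ RL w)
    (run : List V)
    (hrun : IsGreedyRun parent depth RL (Finset.univ.biUnion RL) run) :
    (∀ p ∈ Finset.univ.biUnion RL, ∃ v ∈ run, p ∈ RL v) ∧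
      ∀ S : Finset V, (∀ p ∈ Finset.univ.biUnion RL, ∃ v ∈ S, p ∈ RL v) →
        run.length ≤ S.card := by
  constructor
  · exact fun p hp => greedy_covers RL run _ hrun p hp
  · intro S hS
    exact greedy_optimal hroot hdepth hanc RL hconv run _ S hrun hS
end

section
/- Given a graph H with n vertices, construct the temporal graph G = (V, E, 4) with V = {s_v, v, z_v : v ∈ V(H)} ∪ {s, z} and edges E = {(s,s_v,2), (s_v,v,3), (v,z,4), (s,v,1), (v,z_v,2), (z_v,z,3), (z_v,z,4) : v ∈ V(H)} ∪ {(s_u,z_v,3), (s_v,z_u,3) : (u,v) ∈ E(H)}. Then H has a vertex cover of size k if and only if G has a strict (s,z,3)-temporal separator of size n + k. -/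
def IsStrictTempPath {V : Type} (E : Set (V × V × ℕ)) (s z : V)
    (P : List (V × V × ℕ)) : Prop :=
  P ≠ [] ∧ (∀ e ∈ P, e ∈ E) ∧
    (∀ e, P.head? = some e → e.1 = s) ∧
    (∀ e, P.getLast? = some e → e.2.1 = z) ∧
    List.Chain' (fun e f => e.2.1 = f.1 ∧ e.2.2 < f.2.2) P

def IsStrictTempSepT {V : Type} (E : Set (V × V × ℕ)) (s z : V) (t : ℕ) (S : Set V) : Prop :=
  s ∉ S ∧ z ∉ S ∧ ∀ P, IsStrictTempPath E s z P → ttime P ≤ t → ¬ Avoids P S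

variable {VH : Type}

/-- Vertices of the reduction graph: `(v, 0) = s_v`, `(v, 1) = v`, `(v, 2) = z_v`,
`Sum.inr false = s`, `Sum.inr true = z`. -/
abbrev RW (VH : Type) : Type := (VH × Fin 3) ⊕ Bool

def sv (v : VH) : RW VH := Sum.inl (v, 0)
def vv (v : VH) : RW VH := Sum.inl (v, 1)
def zv (v : VH) : RW VH := Sum.inl (v, 2)
def ss : RW VH := Sum.inr false
def zz : RW VH := Sum.inr true

/-- The temporal graph (with τ = 4) of the reduction from Vertex Cover. -/
def vcE (H : SimpleGraph VH) : Set (RW VH × RW VH × ℕ) :=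
  Esym (
    {e | ∃ v : VH, e = (ss, sv v, 2) ∨ e = (sv v, vv v, 3) ∨ e = (vv v, zz, 4) ∨
          e = (ss, vv v, 1) ∨ e = (vv v, zv v, 2) ∨ e = (zv v, zz, 3) ∨
          e = (zv v, zz, 4)} ∪
    {e | ∃ u v : VH, H.Adj u v ∧ (e = (sv u, zv v, 3) ∨ e = (sv v, zv u, 3))})

/-! ### Auxiliary lemmas -/

lemma chain_time_le_getLast {α β : Type} :
    ∀ (l : List (α × β × ℕ)), List.Chain' (fun e f => e.2.2 < f.2.2) l →
      ∀ x, l.getLast? = some x → ∀ y ∈ l, y.2.2 ≤ x.2.2 := by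
  intro l
  induction l with
  | nil => intro _ x hx; simp at hx
  | cons a t ih =>
    intro hc x hx y hy
    cases t with
    | nil =>
      simp at hx hy
      subst hx; subst hy
      exact le_rfl
    | cons b t2 =>
      rw [List.getLast?_cons_cons] at hx
      rcases List.mem_cons.mp hy with rfl | hy'
      · have hab : y.2.2 < b.2.2 := (List.isChain_cons_cons.mp hc).1
        have := ih hc.tail x hx b List.mem_cons_self
        omega
      · exact ih hc.tail x hx y hy'

section Inversion

variable {H : SimpleGraph VH}

lemma from_ss {e : RW VH × RW VH × ℕ} (he : e ∈ vcE H) (h1 : e.1 = (ss : RW VH)) :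
    (∃ v, e.2.1 = sv v ∧ e.2.2 = 2) ∨ (∃ v, e.2.1 = vv v ∧ e.2.2 = 1) := by
  obtain ⟨a, b, t⟩ := e
  simp only [vcE, Esym, Set.mem_union, Set.mem_setOf_eq] at he
  simp only at h1
  subst h1
  rcases he with (⟨v, h | h | h | h | h | h | h⟩ | ⟨u, v, hadj, h | h⟩) |
      (⟨v, h | h | h | h | h | h | h⟩ | ⟨u, v, hadj, h | h⟩) <;>
    simp_all [ss, sv, vv, zv, zz]

lemma from_sv {v : VH} {e : RW VH × RW VH × ℕ} (he : e ∈ vcE H) (h1 : e.1 = sv v)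
    (ht : 2 < e.2.2) :
    e.2.1 = vv v ∨ ∃ u, (H.Adj u v ∨ H.Adj v u) ∧ e.2.1 = zv u := by
  obtain ⟨a, b, t⟩ := e
  simp only [vcE, Esym, Set.mem_union, Set.mem_setOf_eq] at he
  simp only at h1 ht
  subst h1
  rcases he with (⟨w, h | h | h | h | h | h | h⟩ | ⟨u, w, hadj, h | h⟩) |
      (⟨w, h | h | h | h | h | h | h⟩ | ⟨u, w, hadj, h | h⟩) <;>
    simp_all [ss, sv, vv, zv, zz]

lemma from_vv {v : VH} {e : RW VH × RW VH × ℕ} (he : e ∈ vcE H) (h1 : e.1 = vv v)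
    (ht1 : 1 < e.2.2) (ht2 : e.2.2 ≤ 3) :
    e.2.1 = zv v ∨ e.2.1 = sv v := by
  obtain ⟨a, b, t⟩ := e
  simp only [vcE, Esym, Set.mem_union, Set.mem_setOf_eq] at he
  simp only at h1 ht1 ht2
  subst h1
  rcases he with (⟨w, h | h | h | h | h | h | h⟩ | ⟨u, w, hadj, h | h⟩) |
      (⟨w, h | h | h | h | h | h | h⟩ | ⟨u, w, hadj, h | h⟩) <;>
    simp_all [ss, sv, vv, zv, zz]

lemma mem_vcE_ss_sv (v : VH) : ((ss, sv v, 2) : RW VH × RW VH × ℕ) ∈ vcE H :=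
  Or.inl (Or.inl ⟨v, Or.inl rfl⟩)

lemma mem_vcE_sv_vv (v : VH) : ((sv v, vv v, 3) : RW VH × RW VH × ℕ) ∈ vcE H :=
  Or.inl (Or.inl ⟨v, Or.inr (Or.inl rfl)⟩)

lemma mem_vcE_vv_zz (v : VH) : ((vv v, zz, 4) : RW VH × RW VH × ℕ) ∈ vcE H :=
  Or.inl (Or.inl ⟨v, Or.inr (Or.inr (Or.inl rfl))⟩)

lemma mem_vcE_ss_vv (v : VH) : ((ss, vv v, 1) : RW VH × RW VH × ℕ) ∈ vcE H :=
  Or.inl (Or.inl ⟨v, Or.inr (Or.inr (Or.inr (Or.inl rfl)))⟩)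

lemma mem_vcE_vv_zv (v : VH) : ((vv v, zv v, 2) : RW VH × RW VH × ℕ) ∈ vcE H :=
  Or.inl (Or.inl ⟨v, Or.inr (Or.inr (Or.inr (Or.inr (Or.inl rfl))))⟩)

lemma mem_vcE_zv_zz3 (v : VH) : ((zv v, zz, 3) : RW VH × RW VH × ℕ) ∈ vcE H :=
  Or.inl (Or.inl ⟨v, Or.inr (Or.inr (Or.inr (Or.inr (Or.inr (Or.inl rfl)))))⟩)

lemma mem_vcE_zv_zz4 (v : VH) : ((zv v, zz, 4) : RW VH × RW VH × ℕ) ∈ vcE H :=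
  Or.inl (Or.inl ⟨v, Or.inr (Or.inr (Or.inr (Or.inr (Or.inr (Or.inr rfl)))))⟩)

lemma mem_vcE_sv_zv {u v : VH} (h : H.Adj u v) :
    ((sv v, zv u, 3) : RW VH × RW VH × ℕ) ∈ vcE H :=
  Or.inl (Or.inr ⟨u, v, h, Or.inr rfl⟩)

end Inversion

section SepHits

variable {H : SimpleGraph VH}

lemma sep_hits {S : Set (RW VH)} (hsep : IsStrictTempSepT (vcE H) ss zz 3 S)
    {a b : RW VH} {t1 t2 t3 : ℕ}
    (h1 : (ss, a, t1) ∈ vcE H) (h2 : (a, b, t2) ∈ vcE H) (h3 : (b, zz, t3) ∈ vcE H)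
    (e12 : t1 < t2) (e23 : t2 < t3) (htt : t3 + 1 - t1 ≤ 3) :
    a ∈ S ∨ b ∈ S := by
  by_contra hcon
  push_neg at hcon
  obtain ⟨hs, hz, hsep⟩ := hsep
  refine hsep [(ss, a, t1), (a, b, t2), (b, zz, t3)] ⟨by simp, ?_, ?_, ?_, ?_⟩ ?_ ?_
  · intro e he
    simp only [List.mem_cons, List.not_mem_nil, or_false] at he
    rcases he with rfl | rfl | rfl <;> assumption
  · intro e he
    have h := Option.some.inj he
    subst h; rfl
  · intro e he
    simp only [List.getLast?_cons_cons, List.getLast?_singleton] at he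
    have h := Option.some.inj he
    subst h; rfl
  · exact List.isChain_cons_cons.mpr ⟨⟨rfl, e12⟩,
      List.isChain_cons_cons.mpr ⟨⟨rfl, e23⟩, List.isChain_singleton _⟩⟩
  · simpa [ttime, List.getLast?_cons_cons] using htt
  · intro e he
    simp only [List.mem_cons, List.not_mem_nil, or_false] at he
    rcases he with rfl | rfl | rfl
    · exact ⟨hs, hcon.1⟩
    · exact ⟨hcon.1, hcon.2⟩
    · exact ⟨hcon.2, hz⟩

end SepHits

section Sep

variable [DecidableEq VH]

variable [Fintype VH]

/-- The separator built from a vertex cover. -/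
def vcS (C : Finset VH) : Finset (RW VH) :=
  ((Finset.univ.filter (fun w : VH => w ∉ C)).image vv ∪ C.image sv) ∪ C.image zv

lemma mem_vcS_sv {C : Finset VH} {v : VH} : sv v ∈ vcS C ↔ v ∈ C := by
  simp [vcS, sv, vv, zv, Prod.ext_iff]

lemma mem_vcS_vv {C : Finset VH} {v : VH} : vv v ∈ vcS C ↔ v ∉ C := by
  simp [vcS, sv, vv, zv, Prod.ext_iff]

lemma mem_vcS_zv {C : Finset VH} {v : VH} : zv v ∈ vcS C ↔ v ∈ C := by
  simp [vcS, sv, vv, zv, Prod.ext_iff]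

lemma ss_not_mem_vcS {C : Finset VH} : (ss : RW VH) ∉ vcS C := by
  simp [vcS, ss, sv, vv, zv]

lemma zz_not_mem_vcS {C : Finset VH} : (zz : RW VH) ∉ vcS C := by
  simp [vcS, zz, sv, vv, zv]

lemma card_vcS_le (C : Finset VH) : (vcS C).card ≤ Fintype.card VH + C.card := by
  rw [vcS]
  have h1 : ((Finset.univ.filter (fun w : VH => w ∉ C)).image vv).card ≤
      Fintype.card VH - C.card := by
    refine le_trans (Finset.card_image_le) ?_
    have : Finset.univ.filter (fun w : VH => w ∉ C) = Cᶜ := by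
      ext w; simp
    rw [this, Finset.card_compl]
  have h2 : (C.image (sv : VH → RW VH)).card ≤ C.card := Finset.card_image_le
  have h3 : (C.image (zv : VH → RW VH)).card ≤ C.card := Finset.card_image_le
  have h4 : C.card ≤ Fintype.card VH := Finset.card_le_univ C
  calc (((Finset.univ.filter (fun w : VH => w ∉ C)).image vv ∪ C.image sv) ∪ C.image zv).card
      ≤ ((Finset.univ.filter (fun w : VH => w ∉ C)).image vv ∪ C.image sv).card
        + (C.image zv).card := Finset.card_union_le _ _
    _ ≤ ((Finset.univ.filter (fun w : VH => w ∉ C)).image vv).card + (C.image sv).card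
        + (C.image zv).card := by
          exact Nat.add_le_add_right (Finset.card_union_le _ _) _
    _ ≤ Fintype.card VH + C.card := by omega

end Sep

theorem stmt12 {VH : Type} [Fintype VH] [DecidableEq VH] (H : SimpleGraph VH) (k : ℕ) :
    (∃ C : Finset VH, (∀ u v : VH, H.Adj u v → u ∈ C ∨ v ∈ C) ∧ C.card ≤ k) ↔
      (∃ S : Finset (RW VH), IsStrictTempSepT (vcE H) ss zz 3 ↑S ∧
        S.card ≤ Fintype.card VH + k) := by
  constructor
  · rintro ⟨C, hC, hk⟩
    refine ⟨vcS C, ⟨?_, ?_, ?_⟩, le_trans (card_vcS_le C) (by omega)⟩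
    · simpa using ss_not_mem_vcS (C := C)
    · simpa using zz_not_mem_vcS (C := C)
    · rintro P ⟨hne, hmem, hhead, hlast, hchain⟩ hT hAv
      match P, hne with
      | e1 :: rest, _ =>
      have he1s : e1.1 = ss := hhead e1 rfl
      have he1 : e1 ∈ vcE H := hmem e1 List.mem_cons_self
      match rest with
      | [] =>
        have hz : e1.2.1 = zz := hlast e1 (by simp)
        rcases from_ss he1 he1s with ⟨v, hb, _⟩ | ⟨v, hb, _⟩ <;>
          rw [hz] at hb <;> simp [zz, sv, vv] at hb
      | e2 :: rest2 =>
      have he2 : e2 ∈ vcE H := hmem e2 (by simp)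
      have hrel : e1.2.1 = e2.1 ∧ e1.2.2 < e2.2.2 := (List.isChain_cons_cons.mp hchain).1
      have hlastS : (e1 :: e2 :: rest2).getLast? =
          some ((e1 :: e2 :: rest2).getLast (by simp)) :=
        List.getLast?_eq_getLast (by simp)
      set elast := (e1 :: e2 :: rest2).getLast (by simp) with helast
      have hchainT : List.Chain' (fun e f : RW VH × RW VH × ℕ => e.2.2 < f.2.2)
          (e1 :: e2 :: rest2) := hchain.imp (fun a b h => h.2)
      have hle : e2.2.2 ≤ elast.2.2 :=
        chain_time_le_getLast _ hchainT elast hlastS e2 (by simp)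
      have httP : ttime (e1 :: e2 :: rest2) = elast.2.2 + 1 - e1.2.2 := by
        simp [ttime, hlastS]
      rw [httP] at hT
      have ht2 : e2.2.2 ≤ e1.2.2 + 2 := by omega
      have hA1 := hAv e1 List.mem_cons_self
      have hA2 := hAv e2 (by simp)
      rcases from_ss he1 he1s with ⟨v, hb, htv⟩ | ⟨v, hb, htv⟩
      · -- e1 = (ss, sv v, 2)
        have hvC : v ∉ C := by
          intro hvc
          exact hA1.2 (by rw [hb]; exact Finset.mem_coe.mpr (mem_vcS_sv.mpr hvc))
        have he2s : e2.1 = sv v := by rw [← hrel.1, hb]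
        have ht2' : 2 < e2.2.2 := by omega
        rcases from_sv he2 he2s ht2' with hb2 | ⟨u, hadj, hb2⟩
        · exact hA2.2 (by rw [hb2]; exact Finset.mem_coe.mpr (mem_vcS_vv.mpr hvC))
        · have huC : u ∈ C := by
            rcases hadj with h | h
            · rcases hC u v h with h' | h'
              · exact h'
              · exact absurd h' hvC
            · rcases hC v u h with h' | h'
              · exact absurd h' hvC
              · exact h'
          exact hA2.2 (by rw [hb2]; exact Finset.mem_coe.mpr (mem_vcS_zv.mpr huC))
      · -- e1 = (ss, vv v, 1)
        have hvC : v ∈ C := by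
          by_contra hvc
          exact hA1.2 (by rw [hb]; exact Finset.mem_coe.mpr (mem_vcS_vv.mpr hvc))
        have he2s : e2.1 = vv v := by rw [← hrel.1, hb]
        have htl : 1 < e2.2.2 := by omega
        have htu : e2.2.2 ≤ 3 := by omega
        rcases from_vv he2 he2s htl htu with hb2 | hb2
        · exact hA2.2 (by rw [hb2]; exact Finset.mem_coe.mpr (mem_vcS_zv.mpr hvC))
        · exact hA2.2 (by rw [hb2]; exact Finset.mem_coe.mpr (mem_vcS_sv.mpr hvC))
  · rintro ⟨S, hsep, hk⟩
    classical
    set Cs : Finset VH := Finset.univ.filter (fun v => sv v ∈ S ∨ zv v ∈ S) with hCs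
    have hPA : ∀ v : VH, vv v ∈ S ∨ zv v ∈ S := by
      intro v
      have := sep_hits hsep (mem_vcE_ss_vv v) (mem_vcE_vv_zv v) (mem_vcE_zv_zz3 v)
        (by norm_num) (by norm_num) (by norm_num)
      simpa using this
    have hPB : ∀ v : VH, sv v ∈ S ∨ vv v ∈ S := by
      intro v
      have := sep_hits hsep (mem_vcE_ss_sv v) (mem_vcE_sv_vv v) (mem_vcE_vv_zz v)
        (by norm_num) (by norm_num) (by norm_num)
      simpa using this
    refine ⟨Cs, ?_, ?_⟩
    · intro u v hadj
      have := sep_hits hsep (mem_vcE_ss_sv v) (mem_vcE_sv_zv hadj) (mem_vcE_zv_zz4 u)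
        (by norm_num) (by norm_num) (by norm_num)
      rcases this with h | h
      · exact Or.inr (by simp [hCs]; exact Or.inl (by simpa using h))
      · exact Or.inl (by simp [hCs]; exact Or.inr (by simpa using h))
    · -- cardinality
      set g : VH → Finset (RW VH) := fun v => S ∩ {sv v, vv v, zv v} with hg
      have hsub : ∀ v, g v ⊆ S := fun v => Finset.inter_subset_left
      have hcard1 : ∀ v : VH, 1 ≤ (g v).card := by
        intro v
        rcases hPA v with h | h
        · exact Finset.card_pos.mpr ⟨vv v, by simp [hg, h]⟩
        · exact Finset.card_pos.mpr ⟨zv v, by simp [hg, h]⟩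
      have hcard2 : ∀ v ∈ Cs, 2 ≤ (g v).card := by
        intro v hv
        simp only [hCs, Finset.mem_filter] at hv
        rcases hv.2 with h | h
        · rcases hPA v with h' | h'
          · exact Finset.one_lt_card.mpr ⟨sv v, by simp [hg, h], vv v, by simp [hg, h'],
              by simp [sv, vv]⟩
          · exact Finset.one_lt_card.mpr ⟨sv v, by simp [hg, h], zv v, by simp [hg, h'],
              by simp [sv, zv]⟩
        · rcases hPB v with h' | h'
          · exact Finset.one_lt_card.mpr ⟨sv v, by simp [hg, h'], zv v, by simp [hg, h],
              by simp [sv, zv]⟩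
          · exact Finset.one_lt_card.mpr ⟨vv v, by simp [hg, h'], zv v, by simp [hg, h],
              by simp [vv, zv]⟩
      have hdisj : ∀ v ∈ (Finset.univ : Finset VH), ∀ w ∈ (Finset.univ : Finset VH),
          v ≠ w → Disjoint (g v) (g w) := by
        intro v _ w _ hvw
        rw [Finset.disjoint_left]
        intro x hxv hxw
        simp only [hg, Finset.mem_inter, Finset.mem_insert, Finset.mem_singleton] at hxv hxw
        rcases hxv.2 with rfl | rfl | rfl <;> rcases hxw.2 with h | h | h <;>
          simp_all [sv, vv, zv]
      have hsum : ∑ v : VH, (g v).card ≤ S.card := by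
        rw [← Finset.card_biUnion hdisj]
        exact Finset.card_le_card (Finset.biUnion_subset.mpr (fun v _ => hsub v))
      have hlow : Fintype.card VH + Cs.card ≤ ∑ v : VH, (g v).card := by
        have : ∀ v ∈ (Finset.univ : Finset VH),
            (1 + if v ∈ Cs then 1 else 0) ≤ (g v).card := by
          intro v _
          by_cases h : v ∈ Cs
          · simpa [h] using hcard2 v h
          · simpa [h] using hcard1 v
        calc Fintype.card VH + Cs.card
            = ∑ v : VH, (1 + if v ∈ Cs then 1 else 0) := by
              rw [Finset.sum_add_distrib, Finset.sum_const, Finset.card_univ, smul_eq_mul,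
                mul_one, Finset.sum_boole]
              simp [hCs]
          _ ≤ ∑ v : VH, (g v).card := Finset.sum_le_sum this
      omega
end

section
/- In the temporal graph G constructed from a graph H for the strict-separator reduction (vertex set {s_v, v, z_v : v ∈ V(H)} ∪ {s,z}; edges (s,s_v,2), (s_v,v,3), (v,z,4), (s,v,1), (v,z_v,2), (z_v,z,3), (z_v,z,4) for each v, and (s_u,z_v,3), (s_v,z_u,3) for each edge (u,v) of H), every strict (s,z)-temporal path of travelling time at most 3 has one of the following forms: (s,s_v,2),(s_v,v,3),(v,z,4); or (s,v,1),(v,z_v,2),(z_v,z,3); or (s,s_u,2),(s_u,z_v,3),(z_v,z,4) for some edge (u,v) ∈ E(H). -/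
variable {VH : Type}

lemma time_le_4 {H : SimpleGraph VH} {e : RW VH × RW VH × ℕ} (he : e ∈ vcE H) : e.2.2 ≤ 4 := by
  obtain ⟨a, b, t⟩ := e
  simp only [vcE, Esym, Set.mem_union, Set.mem_setOf_eq] at he
  rcases he with (⟨v, h|h|h|h|h|h|h⟩|⟨u,w,_,h|h⟩)|(⟨v, h|h|h|h|h|h|h⟩|⟨u,w,_,h|h⟩) <;>
    (simp only [Prod.mk.injEq] at h; obtain ⟨rfl, rfl, rfl⟩ := h) <;> simp

lemma step_ss {H : SimpleGraph VH} {e : RW VH × RW VH × ℕ} (he : e ∈ vcE H)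
    (h1 : e.1 = ss) : (∃ v : VH, e = (ss, sv v, 2)) ∨ (∃ v : VH, e = (ss, vv v, 1)) := by
  obtain ⟨a, b, t⟩ := e
  simp only [vcE, Esym, Set.mem_union, Set.mem_setOf_eq] at he
  rcases he with (⟨v, h|h|h|h|h|h|h⟩|⟨u,w,_,h|h⟩)|(⟨v, h|h|h|h|h|h|h⟩|⟨u,w,_,h|h⟩) <;>
    (simp only [Prod.mk.injEq] at h; obtain ⟨rfl, rfl, rfl⟩ := h) <;>
    first
      | exact Or.inl ⟨v, rfl⟩
      | exact Or.inr ⟨v, rfl⟩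
      | (simp [sv, vv, zv, ss, zz] at h1)

lemma step_sv {H : SimpleGraph VH} {e : RW VH × RW VH × ℕ} {x : VH} (he : e ∈ vcE H)
    (h1 : e.1 = sv x) (ht : 2 < e.2.2) :
    e = (sv x, vv x, 3) ∨ (∃ w : VH, H.Adj x w ∧ e = (sv x, zv w, 3)) := by
  obtain ⟨a, b, t⟩ := e
  simp only [vcE, Esym, Set.mem_union, Set.mem_setOf_eq] at he
  rcases he with (⟨v, h|h|h|h|h|h|h⟩|⟨u,w,hadj,h|h⟩)|(⟨v, h|h|h|h|h|h|h⟩|⟨u,w,hadj,h|h⟩) <;>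
    (simp only [Prod.mk.injEq] at h; obtain ⟨rfl, rfl, rfl⟩ := h) <;>
    simp [sv, vv, zv, ss, zz] at h1 <;>
    subst h1 <;>
    first
      | (simp at ht; done)
      | exact Or.inl rfl
      | exact Or.inr ⟨w, hadj, rfl⟩
      | exact Or.inr ⟨u, hadj.symm, rfl⟩

lemma step_vv {H : SimpleGraph VH} {e : RW VH × RW VH × ℕ} {x : VH} (he : e ∈ vcE H)
    (h1 : e.1 = vv x) :
    e = (vv x, zz, 4) ∨ e = (vv x, zv x, 2) ∨ e = (vv x, sv x, 3) ∨ e = (vv x, ss, 1) := by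
  obtain ⟨a, b, t⟩ := e
  simp only [vcE, Esym, Set.mem_union, Set.mem_setOf_eq] at he
  rcases he with (⟨v, h|h|h|h|h|h|h⟩|⟨u,w,hadj,h|h⟩)|(⟨v, h|h|h|h|h|h|h⟩|⟨u,w,hadj,h|h⟩) <;>
    (simp only [Prod.mk.injEq] at h; obtain ⟨rfl, rfl, rfl⟩ := h) <;>
    simp [sv, vv, zv, ss, zz] at h1 <;>
    subst h1 <;>
    first
      | exact Or.inl rfl
      | exact Or.inr (Or.inl rfl)
      | exact Or.inr (Or.inr (Or.inl rfl))
      | exact Or.inr (Or.inr (Or.inr rfl))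

lemma step_zv {H : SimpleGraph VH} {e : RW VH × RW VH × ℕ} {x : VH} (he : e ∈ vcE H)
    (h1 : e.1 = zv x) :
    e = (zv x, zz, 3) ∨ e = (zv x, zz, 4) ∨ e = (zv x, vv x, 2) ∨
      (∃ w : VH, H.Adj x w ∧ e = (zv x, sv w, 3)) := by
  obtain ⟨a, b, t⟩ := e
  simp only [vcE, Esym, Set.mem_union, Set.mem_setOf_eq] at he
  rcases he with (⟨v, h|h|h|h|h|h|h⟩|⟨u,w,hadj,h|h⟩)|(⟨v, h|h|h|h|h|h|h⟩|⟨u,w,hadj,h|h⟩) <;>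
    (simp only [Prod.mk.injEq] at h; obtain ⟨rfl, rfl, rfl⟩ := h) <;>
    simp [sv, vv, zv, ss, zz] at h1 <;>
    subst h1 <;>
    first
      | exact Or.inl rfl
      | exact Or.inr (Or.inl rfl)
      | exact Or.inr (Or.inr (Or.inl rfl))
      | exact Or.inr (Or.inr (Or.inr ⟨u, hadj.symm, rfl⟩))
      | exact Or.inr (Or.inr (Or.inr ⟨w, hadj, rfl⟩))

lemma step_zz {H : SimpleGraph VH} {e : RW VH × RW VH × ℕ} (he : e ∈ vcE H)
    (h1 : e.1 = zz) :
    (∃ w : VH, e = (zz, vv w, 4)) ∨ (∃ w : VH, e = (zz, zv w, 3)) ∨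
      (∃ w : VH, e = (zz, zv w, 4)) := by
  obtain ⟨a, b, t⟩ := e
  simp only [vcE, Esym, Set.mem_union, Set.mem_setOf_eq] at he
  rcases he with (⟨v, h|h|h|h|h|h|h⟩|⟨u,w,hadj,h|h⟩)|(⟨v, h|h|h|h|h|h|h⟩|⟨u,w,hadj,h|h⟩) <;>
    (simp only [Prod.mk.injEq] at h; obtain ⟨rfl, rfl, rfl⟩ := h) <;>
    first
      | exact Or.inl ⟨v, rfl⟩
      | exact Or.inr (Or.inl ⟨v, rfl⟩)
      | exact Or.inr (Or.inr ⟨v, rfl⟩)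
      | (simp [sv, vv, zv, ss, zz] at h1)

theorem stmt13 {VH : Type} (H : SimpleGraph VH) (P : List (RW VH × RW VH × ℕ))
    (hP : IsStrictTempPath (vcE H) ss zz P) (htt : ttime P ≤ 3) :
    (∃ v : VH, P = [(ss, sv v, 2), (sv v, vv v, 3), (vv v, zz, 4)]) ∨
    (∃ v : VH, P = [(ss, vv v, 1), (vv v, zv v, 2), (zv v, zz, 3)]) ∨
    (∃ u v : VH, H.Adj u v ∧ P = [(ss, sv u, 2), (sv u, zv v, 3), (zv v, zz, 4)]) := by
  obtain ⟨hne, hmem, hhead, hlast, hchain⟩ := hP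
  cases P with
  | nil => exact absurd rfl hne
  | cons e1 rest =>
  have h1 : e1.1 = ss := hhead e1 rfl
  rcases step_ss (hmem e1 (by simp)) h1 with ⟨v, rfl⟩ | ⟨v, rfl⟩
  · -- e1 = (ss, sv v, 2)
    cases rest with
    | nil =>
      have := hlast (ss, sv v, 2) (by simp)
      simp [sv, zz] at this
    | cons e2 rest2 =>
    rw [show List.Chain' _ _ = List.IsChain _ _ from rfl, List.isChain_cons_cons] at hchain
    obtain ⟨⟨hc1, hc2⟩, hchain⟩ := hchain
    rcases step_sv (hmem e2 (by simp)) hc1.symm hc2 with rfl | ⟨w, hadj, rfl⟩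
    · -- e2 = (sv v, vv v, 3)
      cases rest2 with
      | nil =>
        have := hlast (sv v, vv v, 3) (by simp)
        simp [vv, zz] at this
      | cons e3 rest3 =>
      rw [List.isChain_cons_cons] at hchain
      obtain ⟨⟨hc3, hc4⟩, hchain⟩ := hchain
      rcases step_vv (hmem e3 (by simp)) hc3.symm with rfl | rfl | rfl | rfl
      · -- e3 = (vv v, zz, 4)
        cases rest3 with
        | nil => exact Or.inl ⟨v, rfl⟩
        | cons e4 rest4 =>
          rw [List.isChain_cons_cons] at hchain
          obtain ⟨⟨hc5, hc6⟩, -⟩ := hchain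
          have h4 := time_le_4 (hmem e4 (by simp))
          simp at hc6
          omega
      · simp at hc4
      · simp at hc4
      · simp at hc4
    · -- e2 = (sv v, zv w, 3), Adj v w
      cases rest2 with
      | nil =>
        have := hlast (sv v, zv w, 3) (by simp)
        simp [zv, zz] at this
      | cons e3 rest3 =>
      rw [List.isChain_cons_cons] at hchain
      obtain ⟨⟨hc3, hc4⟩, hchain⟩ := hchain
      rcases step_zv (hmem e3 (by simp)) hc3.symm with rfl | rfl | rfl | ⟨x, hx, rfl⟩
      · simp at hc4
      · -- e3 = (zv w, zz, 4)
        cases rest3 with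
        | nil => exact Or.inr (Or.inr ⟨v, w, hadj, rfl⟩)
        | cons e4 rest4 =>
          rw [List.isChain_cons_cons] at hchain
          obtain ⟨⟨hc5, hc6⟩, -⟩ := hchain
          have h4 := time_le_4 (hmem e4 (by simp))
          simp at hc6
          omega
      · simp at hc4
      · simp at hc4
  · -- e1 = (ss, vv v, 1)
    cases rest with
    | nil =>
      have := hlast (ss, vv v, 1) (by simp)
      simp [vv, zz] at this
    | cons e2 rest2 =>
    rw [show List.Chain' _ _ = List.IsChain _ _ from rfl, List.isChain_cons_cons] at hchain
    obtain ⟨⟨hc1, hc2⟩, hchain⟩ := hchain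
    rcases step_vv (hmem e2 (by simp)) hc1.symm with rfl | rfl | rfl | rfl
    · -- e2 = (vv v, zz, 4) : ttime too big
      cases rest2 with
      | nil => simp [ttime] at htt
      | cons e3 rest3 =>
        rw [List.isChain_cons_cons] at hchain
        obtain ⟨⟨hc3, hc4⟩, -⟩ := hchain
        have h4 := time_le_4 (hmem e3 (by simp))
        simp at hc4
        omega
    · -- e2 = (vv v, zv v, 2)
      cases rest2 with
      | nil =>
        have := hlast (vv v, zv v, 2) (by simp)
        simp [zv, zz] at this
      | cons e3 rest3 =>
      rw [List.isChain_cons_cons] at hchain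
      obtain ⟨⟨hc3, hc4⟩, hchain⟩ := hchain
      rcases step_zv (hmem e3 (by simp)) hc3.symm with rfl | rfl | rfl | ⟨x, hx, rfl⟩
      · -- e3 = (zv v, zz, 3)
        cases rest3 with
        | nil => exact Or.inr (Or.inl ⟨v, rfl⟩)
        | cons e4 rest4 =>
        rw [List.isChain_cons_cons] at hchain
        obtain ⟨⟨hc5, hc6⟩, hchain⟩ := hchain
        rcases step_zz (hmem e4 (by simp)) hc5.symm with ⟨w, rfl⟩ | ⟨w, rfl⟩ | ⟨w, rfl⟩
        · cases rest4 with
          | nil =>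
            have := hlast (zz, vv w, 4) (by simp)
            simp [vv, zz] at this
          | cons e5 rest5 =>
            rw [List.isChain_cons_cons] at hchain
            obtain ⟨⟨hc7, hc8⟩, -⟩ := hchain
            have h5 := time_le_4 (hmem e5 (by simp))
            simp at hc8
            omega
        · simp at hc6
        · cases rest4 with
          | nil =>
            have := hlast (zz, zv w, 4) (by simp)
            simp [zv, zz] at this
          | cons e5 rest5 =>
            rw [List.isChain_cons_cons] at hchain
            obtain ⟨⟨hc7, hc8⟩, -⟩ := hchain
            have h5 := time_le_4 (hmem e5 (by simp))
            simp at hc8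
            omega
      · -- e3 = (zv v, zz, 4) : ttime too big
        cases rest3 with
        | nil => simp [ttime] at htt
        | cons e4 rest4 =>
          rw [List.isChain_cons_cons] at hchain
          obtain ⟨⟨hc5, hc6⟩, -⟩ := hchain
          have h4 := time_le_4 (hmem e4 (by simp))
          simp at hc6
          omega
      · simp at hc4
      · -- e3 = (zv v, sv x, 3)
        cases rest3 with
        | nil =>
          have := hlast (zv v, sv x, 3) (by simp)
          simp [sv, zz] at this
        | cons e4 rest4 =>
        rw [List.isChain_cons_cons] at hchain
        obtain ⟨⟨hc5, hc6⟩, -⟩ := hchain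
        simp at hc6
        rcases step_sv (hmem e4 (by simp)) hc5.symm (by omega) with rfl | ⟨w, hw, rfl⟩ <;>
          simp at hc6
    · -- e2 = (vv v, sv v, 3)
      cases rest2 with
      | nil =>
        have := hlast (vv v, sv v, 3) (by simp)
        simp [sv, zz] at this
      | cons e3 rest3 =>
        rw [List.isChain_cons_cons] at hchain
        obtain ⟨⟨hc3, hc4⟩, -⟩ := hchain
        simp at hc4
        rcases step_sv (hmem e3 (by simp)) hc3.symm (by omega) with rfl | ⟨w, hw, rfl⟩ <;>
          simp at hc4
    · simp at hc2
end

section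
/- Let I_1, ..., I_n be unit intervals sorted by non-decreasing starting points, and let SP be the subset constructed greedily: start with I_1 in SP and index = 1; repeatedly let j be the largest index with s(I_j) < e(I_index) if it exists, else j = index + 1; add I_j to SP, set index = j; stop when j > n (ensuring I_n ∈ SP). Then any point p covered by some interval of {I_1,...,I_n} is covered by some interval of SP. -/
/-- One step of the greedy selection: from the current index `i`, move to the largest
index (at most `n - 1`) whose interval starts before `e(I_i) = start i + 1`, or to
`i + 1` if that largest index is not beyond `i`. -/
def nextIdx (n : ℕ) (start : ℕ → ℚ) (i : ℕ) : ℕ :=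
  max (i + 1) (Nat.findGreatest (fun j => start j < start i + 1) (n - 1))

/-- Membership in the greedily chosen special set `SP` (indices are iterates of
`nextIdx` starting from the first interval). -/
def InSP (n : ℕ) (start : ℕ → ℚ) (j : ℕ) : Prop :=
  j < n ∧ ∃ k : ℕ, (nextIdx n start)^[k] 0 = j

lemma iter_ge (n : ℕ) (start : ℕ → ℚ) (k : ℕ) : k ≤ (nextIdx n start)^[k] 0 := by
  induction k with
  | zero => simp
  | succ k ih =>
    rw [Function.iterate_succ_apply']
    exact Nat.succ_le_of_lt (lt_of_le_of_lt ih
      (lt_of_lt_of_le (Nat.lt_succ_self _) (le_max_left _ _)))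

theorem stmt15 (n : ℕ) (hn : 0 < n) (start : ℕ → ℚ)
    (hmono : ∀ i j : ℕ, i ≤ j → j < n → start i ≤ start j)
    (p : ℚ) (i : ℕ) (hi : i < n) (h1 : start i ≤ p) (h2 : p ≤ start i + 1) :
    ∃ j : ℕ, InSP n start j ∧ start j ≤ p ∧ p ≤ start j + 1 := by
  set f := nextIdx n start with hf
  -- largest k with f^[k] 0 ≤ i
  set k := Nat.findGreatest (fun k => f^[k] 0 ≤ i) i with hk
  set j := f^[k] 0 with hj
  have hP0 : f^[0] 0 ≤ i := by simp
  have hji : j ≤ i := Nat.findGreatest_spec (P := fun k => f^[k] 0 ≤ i) (Nat.zero_le i) hP0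
  have hkj : k ≤ j := iter_ge n start k
  have hjn : j < n := lt_of_le_of_lt hji hi
  have hsj : start j ≤ start i := hmono j i hji hi
  by_cases hcase : p ≤ start j + 1
  · exact ⟨j, ⟨hjn, k, rfl⟩, le_trans hsj h1, hcase⟩
  · push_neg at hcase
    have hjlt : j < i := by
      rcases lt_or_eq_of_le hji with h | h
      · exact h
      · exact absurd (h ▸ h2) (not_le_of_gt hcase)
    -- next iterate m exceeds i
    set m := f^[k+1] 0 with hm
    have hmi : i < m := by
      by_contra hle
      push_neg at hle
      have hk1 : k + 1 ≤ i := by omega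
      exact Nat.findGreatest_is_greatest (Nat.lt_succ_self k) hk1 hle
    have hmval : m = f j := by rw [hm, hj, Function.iterate_succ_apply']
    -- m must be the findGreatest branch
    have hfg : m = Nat.findGreatest (fun l => start l < start j + 1) (n - 1) := by
      rw [hmval, hf, nextIdx]
      rcases max_cases (j + 1) (Nat.findGreatest (fun l => start l < start j + 1) (n - 1))
        with ⟨he, hge⟩ | ⟨he, _⟩
      · exfalso
        have : i < j + 1 := by
          have := hmi; rw [hmval, hf, nextIdx, he] at this; exact this
        omega
      · exact he
    have hmn1 : m ≤ n - 1 := hfg ▸ Nat.findGreatest_le (n - 1)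
    have hmn : m < n := by omega
    have hm0 : m ≠ 0 := by omega
    have hPm : start m < start j + 1 :=
      Nat.findGreatest_of_ne_zero hfg.symm hm0
    have him : start i ≤ start m := hmono i m (le_of_lt hmi) hmn
    refine ⟨m, ⟨hmn, k + 1, rfl⟩, ?_, ?_⟩
    · exact le_of_lt (lt_of_lt_of_le hPm (le_of_lt hcase))
    · linarith
end

section
/- Let (U, 𝒮) be a Set Cover instance and f(U,𝒮) the temporal graph of the strict reduction (one disjoint temporal (s,z)-path per element i of U, at time i·t, through the vertices corresponding to the sets containing i). Then the minimum size of an (s,z,t)-temporal separator in f(U,𝒮) equals the minimum size of a set cover of (U, 𝒮). -/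
namespace SC17

variable {V : Type}

def step (a b : ℕ) : Prop := b = a + 1 ∨ a = b + 1

def edgesOf (θ : ℕ) : List V → List (V × V × ℕ)
  | a :: b :: rest => (a, b, θ) :: edgesOf θ (b :: rest)
  | _ => []

lemma zipWith_eq_edgesOf (θ : ℕ) :
    ∀ (xs : List V) (x y : V),
      List.zipWith (fun a b => (a, b, θ)) (x :: xs) (xs ++ [y]) = edgesOf θ (x :: (xs ++ [y]))
  | [], x, y => rfl
  | b :: xs, x, y => by
      simp only [List.cons_append, List.zipWith_cons_cons, edgesOf]
      exact congrArg _ (zipWith_eq_edgesOf θ xs b y)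

lemma edgesOf_ne_nil (θ : ℕ) (x y : V) (r : List V) : edgesOf θ (x :: y :: r) ≠ [] := by
  simp [edgesOf]

lemma head?_edgesOf (θ : ℕ) (x y : V) (r : List V) :
    (edgesOf θ (x :: y :: r)).head? = some (x, y, θ) := rfl

lemma getLast?_edgesOf (θ : ℕ) :
    ∀ (r : List V) (x y : V), ∃ p : V,
      (edgesOf θ (x :: y :: r)).getLast? =
        some (p, (x :: y :: r).getLast (List.cons_ne_nil _ _), θ)
  | [], x, y => ⟨x, by simp [edgesOf]⟩
  | c :: r', x, y => by
      obtain ⟨p, hp⟩ := getLast?_edgesOf θ r' y c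
      refine ⟨p, ?_⟩
      have h1 : edgesOf θ (x :: y :: c :: r') = (x, y, θ) :: (y, c, θ) :: edgesOf θ (c :: r') :=
        rfl
      rw [h1, List.getLast?_cons_cons]
      have h2 : (y, c, θ) :: edgesOf θ (c :: r') = edgesOf θ (y :: c :: r') := rfl
      rw [h2, hp]
      simp [List.getLast]

lemma mem_edgesOf (θ : ℕ) :
    ∀ (r : List V) (x y : V) (e : V × V × ℕ), e ∈ edgesOf θ (x :: y :: r) →
      ∃ k, (x :: y :: r)[k]? = some e.1 ∧ (x :: y :: r)[k + 1]? = some e.2.1 ∧ e.2.2 = θ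
  | [], x, y, e, he => by
      simp [edgesOf] at he
      exact ⟨0, by simp [he]⟩
  | c :: r', x, y, e, he => by
      rcases (List.mem_cons).1 he with h | h
      · exact ⟨0, by simp [h]⟩
      · obtain ⟨k, h1, h2, h3⟩ := mem_edgesOf θ r' y c e h
        exact ⟨k + 1, by simpa using h1, by simpa using h2, h3⟩

lemma chain'_edgesOf (θ : ℕ) :
    ∀ (r : List V) (x y : V),
      List.Chain' (fun e f => e.2.1 = f.1 ∧ e.2.2 ≤ f.2.2) (edgesOf θ (x :: y :: r))
  | [], x, y => by simp [edgesOf, List.Chain']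
  | c :: r', x, y => by
      have h1 : edgesOf θ (x :: y :: c :: r') = (x, y, θ) :: edgesOf θ (y :: c :: r') := rfl
      rw [h1]
      refine List.isChain_cons.2 ⟨?_, chain'_edgesOf θ r' y c⟩
      intro f hf
      rw [show (edgesOf θ (y :: c :: r')).head? = some (y, c, θ) from rfl] at hf
      cases hf
      exact ⟨rfl, le_refl _⟩

/-- position of a vertex in a list, with a fixed instance path. -/
def posIn [DecidableEq V] (w : List V) (v : V) : ℕ := w.idxOf v

lemma nodup_indexOf_eq [DecidableEq V] {w : List V} (hw : w.Nodup) {k : ℕ} {a : V}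
    (h : w[k]? = some a) : posIn w a = k := by
  rw [posIn]
  have hk : k < w.length := (List.getElem?_eq_some_iff.1 h).1
  have hka : w[k] = a := (List.getElem?_eq_some_iff.1 h).2
  have ha : a ∈ w := by rw [← hka]; exact List.getElem_mem _
  have hlt : w.idxOf a < w.length := List.idxOf_lt_length_iff.2 ha
  have : w[w.idxOf a] = w[k] := by rw [List.getElem_idxOf hlt, hka]
  exact hw.getElem_inj_iff.1 this

lemma posIn_inj [DecidableEq V] {w : List V} (hw : w.Nodup) {a b : V} (ha : a ∈ w)
    (hb : b ∈ w) (h : posIn w a = posIn w b) : a = b := by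
  rw [posIn, posIn] at h
  exact (List.idxOf_inj ha).1 h

lemma ivt (c : ℕ) : ∀ (L : List ℕ) (a : ℕ), List.Chain step a L → a ≤ c →
    ∀ d, (a :: L).getLast? = some d → c ≤ d → c ∈ a :: L
  | [], a, _, h1, d, hd, h2 => by
      simp at hd
      subst hd
      simp [Nat.le_antisymm h2 h1]
  | b :: L, a, hch, h1, d, hd, h2 => by
      rcases eq_or_lt_of_le h1 with rfl | h1'
      · exact List.mem_cons_self
      · simp only [List.Chain, List.isChain_cons_cons] at hch
        have hb : b ≤ c := by rcases hch.1 with h | h <;> omega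
        rw [List.getLast?_cons_cons] at hd
        exact List.mem_cons_of_mem _ (ivt c L b hch.2 hb d hd h2)

lemma chain_pos [DecidableEq V] (w : List V) :
    ∀ (P : List (V × V × ℕ)) (v : V),
      (∀ e ∈ P, step (posIn w e.1) (posIn w e.2.1)) →
      List.Chain' (fun e f => e.2.1 = f.1 ∧ e.2.2 ≤ f.2.2) P →
      (∀ h ∈ P.head?, h.1 = v) →
      List.Chain step (posIn w v) (P.map fun e => posIn w e.2.1)
  | [], v, _, _, _ => List.Chain.nil
  | e :: P', v, hadj, hch, hh => by
      rw [List.map_cons]; simp only [List.Chain, List.isChain_cons_cons]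
      have hv : e.1 = v := hh e (by simp)
      constructor
      · rw [← hv]; exact hadj e (by simp)
      · simp only [List.Chain', List.isChain_cons] at hch
        exact chain_pos w P' e.2.1 (fun f hf => hadj f (by simp [hf])) hch.2
          (fun f hf => (hch.1 f hf).1.symm)

lemma chain'_le_bounds :
    ∀ (L : List ℕ) (a : ℕ), List.Chain' (· ≤ ·) (a :: L) →
      ∀ d, (a :: L).getLast? = some d → a ≤ d ∧ ∀ x ∈ L, a ≤ x ∧ x ≤ d
  | [], a, _, d, hd => by simp at hd; subst hd; simp
  | b :: L, a, hch, d, hd => by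
      simp only [List.Chain', List.isChain_cons_cons] at hch
      rw [List.getLast?_cons_cons] at hd
      obtain ⟨h1, h2⟩ := chain'_le_bounds L b hch.2 d hd
      refine ⟨le_trans hch.1 h1, ?_⟩
      intro x hx
      rcases List.mem_cons.1 hx with rfl | hx
      · exact ⟨hch.1, h1⟩
      · obtain ⟨ha, hb⟩ := h2 x hx
        exact ⟨le_trans hch.1 ha, hb⟩

/-- The vertex list of the canonical path. -/
def wlist {m : ℕ} (l : List (Fin m)) : List (Fin m ⊕ Bool) :=
  Sum.inr false :: (l.map Sum.inl ++ [Sum.inr true])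

lemma pathEdges_eq_edgesOf (l : List (Fin m)) (θ : ℕ) :
    pathEdges l θ = edgesOf θ (wlist l) :=
  zipWith_eq_edgesOf θ _ _ _

lemma wlist_shape (l : List (Fin m)) :
    ∃ (y : Fin m ⊕ Bool) (r : List (Fin m ⊕ Bool)),
      l.map Sum.inl ++ [Sum.inr true] = y :: r := by
  cases l with
  | nil => exact ⟨_, _, rfl⟩
  | cons a l' => exact ⟨_, _, rfl⟩

lemma wlist_nodup {l : List (Fin m)} (hl : l.Nodup) : (wlist l).Nodup := by
  simp [wlist, List.nodup_append, hl.map Sum.inl_injective, List.disjoint_singleton]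

lemma mem_wlist {l : List (Fin m)} {v : Fin m ⊕ Bool} :
    v ∈ wlist l ↔ v = Sum.inr false ∨ (∃ j ∈ l, v = Sum.inl j) ∨ v = Sum.inr true := by
  simp only [wlist, List.mem_cons, List.mem_append, List.mem_map, List.mem_singleton]
  aesop

lemma scE_mem {e : (Fin m ⊕ Bool) × (Fin m ⊕ Bool) × ℕ} (he : e ∈ scE n m t Sfam) :
    ∃ i : Fin n, e ∈ pathEdges (sortedSets Sfam i) ((i.1 + 1) * t) ∨
      (e.2.1, e.1, e.2.2) ∈ pathEdges (sortedSets Sfam i) ((i.1 + 1) * t) := by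
  rcases he with h | h
  · obtain ⟨i, hi⟩ := h
    exact ⟨i, Or.inl hi⟩
  · obtain ⟨i, hi⟩ := h
    exact ⟨i, Or.inr hi⟩

lemma edge_props {l : List (Fin m)} (hl : l.Nodup) {θ : ℕ}
    {e : (Fin m ⊕ Bool) × (Fin m ⊕ Bool) × ℕ}
    (he : e ∈ pathEdges l θ ∨ (e.2.1, e.1, e.2.2) ∈ pathEdges l θ) :
    e.2.2 = θ ∧ e.1 ∈ wlist l ∧ e.2.1 ∈ wlist l ∧
      step (posIn (wlist l) e.1) (posIn (wlist l) e.2.1) := by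
  obtain ⟨y, r, hyr⟩ := wlist_shape l
  have hw : wlist l = Sum.inr false :: y :: r := by rw [wlist, hyr]
  have hnd := wlist_nodup hl
  rcases he with h | h
  · rw [pathEdges_eq_edgesOf, hw] at h
    obtain ⟨k, h1, h2, h3⟩ := mem_edgesOf θ r _ y e h
    rw [← hw] at h1 h2
    have i1 := nodup_indexOf_eq hnd h1
    have i2 := nodup_indexOf_eq hnd h2
    exact ⟨h3, List.mem_of_getElem? h1, List.mem_of_getElem? h2, Or.inl (by rw [i2, i1])⟩
  · rw [pathEdges_eq_edgesOf, hw] at h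
    obtain ⟨k, h1, h2, h3⟩ := mem_edgesOf θ r _ y _ h
    simp only at h1 h2 h3
    rw [← hw] at h1 h2
    have i1 := nodup_indexOf_eq hnd h1
    have i2 := nodup_indexOf_eq hnd h2
    exact ⟨h3, List.mem_of_getElem? h2, List.mem_of_getElem? h1, Or.inr (by rw [i2, i1])⟩

lemma sortedSets_nodup (i : Fin n) : (sortedSets Sfam i).Nodup :=
  Finset.sort_nodup _ _

lemma mem_sortedSets {i : Fin n} {j : Fin m} : j ∈ sortedSets Sfam i ↔ i ∈ Sfam j := by
  simp [sortedSets, Finset.mem_sort]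

lemma canonical_path (ht : 1 ≤ t) (i : Fin n) :
    IsTempPath (scE n m t Sfam) (Sum.inr false) (Sum.inr true)
      (pathEdges (sortedSets Sfam i) ((i.1 + 1) * t)) ∧
    ttime (pathEdges (sortedSets Sfam i) ((i.1 + 1) * t)) ≤ t := by
  set l := sortedSets Sfam i with hl
  set θ := (i.1 + 1) * t with hθ
  obtain ⟨y, r, hyr⟩ := wlist_shape l
  have hw : wlist l = Sum.inr false :: y :: r := by rw [wlist, hyr]
  have hE : pathEdges l θ = edgesOf θ (Sum.inr false :: y :: r) := by
    rw [pathEdges_eq_edgesOf, hw]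
  obtain ⟨p, hp⟩ := getLast?_edgesOf θ r (Sum.inr false) y
  have hgl : (Sum.inr false :: y :: r).getLast (List.cons_ne_nil _ _) = Sum.inr true := by
    have h1 : (Sum.inr false :: y :: r : List (Fin m ⊕ Bool)).getLast? =
        some ((Sum.inr false :: y :: r).getLast (List.cons_ne_nil _ _)) :=
      List.getLast?_eq_getLast_of_ne_nil _
    have h2 : (Sum.inr false :: y :: r : List (Fin m ⊕ Bool)).getLast? = some (Sum.inr true) := by
      rw [← hw, wlist,
        show (Sum.inr false :: (l.map Sum.inl ++ [Sum.inr true]) : List (Fin m ⊕ Bool)) =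
          (Sum.inr false :: l.map Sum.inl) ++ [Sum.inr true] from rfl,
        List.getLast?_concat]
    rw [h1] at h2
    exact Option.some_injective _ h2
  refine ⟨⟨?_, ?_, ?_, ?_, ?_⟩, ?_⟩
  · rw [hE]; exact edgesOf_ne_nil θ _ _ _
  · intro e he
    exact Or.inl ⟨i, he⟩
  · intro e hhe
    rw [hE, head?_edgesOf] at hhe
    cases hhe; rfl
  · intro e hle
    rw [hE, hp] at hle
    cases hle
    exact hgl
  · rw [hE]; exact chain'_edgesOf θ r _ y
  · rw [ttime, hE, hp, head?_edgesOf]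
    simp
    omega

lemma sep_from_cover (ht : 1 ≤ t) {J : Finset (Fin m)} (hJ : ∀ i : Fin n, ∃ j ∈ J, i ∈ Sfam j) :
    IsTempSepT (scE n m t Sfam) (Sum.inr false) (Sum.inr true) t
      (↑(J.image (Sum.inl : Fin m → Fin m ⊕ Bool)) : Set (Fin m ⊕ Bool)) := by
  refine ⟨by simp, by simp, ?_⟩
  rintro P ⟨hne, hE, hhead, hlast, hchain⟩ htt hav
  obtain ⟨e₀, P', rfl⟩ : ∃ e₀ P', P = e₀ :: P' := by
    cases P with
    | nil => exact absurd rfl hne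
    | cons a b => exact ⟨_, _, rfl⟩
  obtain ⟨i₀, h₀⟩ := scE_mem (hE e₀ (by simp))
  set l := sortedSets Sfam i₀ with hl
  set θ := (i₀.1 + 1) * t with hθ
  set w := wlist l with hwdef
  have hnd := wlist_nodup (sortedSets_nodup (Sfam := Sfam) i₀)
  have hτ0 : e₀.2.2 = θ := (edge_props (sortedSets_nodup i₀) h₀).1
  have hle : (e₀ :: P').getLast? = some ((e₀ :: P').getLast (by simp)) :=
    List.getLast?_eq_getLast_of_ne_nil (by simp)
  set e₁ := (e₀ :: P').getLast (by simp) with he₁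
  have hz : e₁.2.1 = Sum.inr true := hlast e₁ hle
  have hchainT : List.Chain' (· ≤ ·) ((e₀ :: P').map (fun e => e.2.2)) :=
    (List.isChain_map _).2 (List.IsChain.imp (fun a b h => h.2) hchain)
  have hglT : ((e₀ :: P').map (fun e => e.2.2)).getLast? = some e₁.2.2 := by
    rw [List.getLast?_map, hle]; rfl
  have hbounds := chain'_le_bounds (P'.map (fun e => e.2.2)) e₀.2.2
    (by simpa using hchainT) e₁.2.2 (by simpa using hglT)
  have httval : ttime (e₀ :: P') = e₁.2.2 + 1 - e₀.2.2 := by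
    rw [ttime, hle]; rfl
  have htt' : e₁.2.2 + 1 ≤ t + θ := by
    rw [httval] at htt
    omega
  have hall : ∀ e ∈ e₀ :: P', e ∈ pathEdges l θ ∨ (e.2.1, e.1, e.2.2) ∈ pathEdges l θ := by
    intro e he
    obtain ⟨i, hi⟩ := scE_mem (hE e he)
    have hte : e.2.2 = (i.1 + 1) * t := (edge_props (sortedSets_nodup i) hi).1
    have hlow : θ ≤ e.2.2 ∧ e.2.2 ≤ e₁.2.2 := by
      rcases List.mem_cons.1 he with rfl | he'
      · exact ⟨le_of_eq hτ0.symm, (hbounds.1 : _)⟩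
      · have := hbounds.2 e.2.2 (List.mem_map_of_mem he')
        rw [hτ0] at this
        exact this
    have h1 : (i₀.1 + 1) * t ≤ (i.1 + 1) * t := by rw [← hθ, ← hte]; exact hlow.1
    have h2 : (i.1 + 1) * t < (i₀.1 + 2) * t := by
      have : (i₀.1 + 2) * t = θ + t := by rw [hθ]; ring
      rw [this, ← hte]
      omega
    have hi1 : i₀.1 + 1 ≤ i.1 + 1 := Nat.le_of_mul_le_mul_right h1 ht
    have hi2 : i.1 + 1 < i₀.1 + 2 := lt_of_mul_lt_mul_right h2 (Nat.zero_le t)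
    have : i = i₀ := Fin.ext (by omega)
    rw [this] at hi
    exact hi
  have hadj : ∀ e ∈ e₀ :: P', step (posIn w e.1) (posIn w e.2.1) :=
    fun e he => (edge_props (sortedSets_nodup i₀) (hall e he)).2.2.2
  have hmemw : ∀ e ∈ e₀ :: P', e.1 ∈ w ∧ e.2.1 ∈ w :=
    fun e he => ⟨(edge_props (sortedSets_nodup i₀) (hall e he)).2.1,
      (edge_props (sortedSets_nodup i₀) (hall e he)).2.2.1⟩
  have hchainpos := chain_pos w (e₀ :: P') (Sum.inr false) hadj hchain
    (fun h hh => by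
      have he : e₀ = h := by simpa using hh
      subst he
      exact hhead e₀ rfl)
  letI : BEq (Fin m ⊕ Bool) := instBEqOfDecidableEq
  have hpos_s : posIn w (Sum.inr false) = 0 := by
    rw [posIn, hwdef, wlist]
    exact List.idxOf_cons_self
  have hsplit : w = (Sum.inr false :: l.map Sum.inl) ++ [Sum.inr true] := rfl
  have hpos_z : posIn w (Sum.inr true) = 1 + l.length := by
    rw [posIn, hsplit, List.idxOf_append_of_notMem (by simp), List.idxOf_cons_self]
    simp
    omega
  obtain ⟨j, hjJ, hij⟩ := hJ i₀
  have hjl : Sum.inl j ∈ w := mem_wlist.2 (Or.inr (Or.inl ⟨j, mem_sortedSets.2 hij, rfl⟩))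
  have hc_lt : posIn w (Sum.inl j) < 1 + l.length := by
    have hjm : (Sum.inl j : Fin m ⊕ Bool) ∈ Sum.inr false :: l.map Sum.inl := by
      simp [hl, mem_sortedSets.2 hij]
    rw [posIn, hsplit, List.idxOf_append_of_mem hjm, List.idxOf_cons_ne _ (by simp)]
    have hjm2 : (Sum.inl j : Fin m ⊕ Bool) ∈ l.map Sum.inl := by
      simp [hl, mem_sortedSets.2 hij]
    have := List.idxOf_lt_length_iff.2 hjm2
    simp at this
    omega
  have hc_pos : 0 < posIn w (Sum.inl j) := by
    rw [posIn, hwdef, wlist, List.idxOf_cons_ne _ (by simp)]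
    omega
  have hlastpos : ((posIn w (Sum.inr false)) :: ((e₀ :: P').map (fun e => posIn w e.2.1))).getLast?
      = some (posIn w (Sum.inr true)) := by
    have hmc : (e₀ :: P').map (fun e => posIn w e.2.1)
        = posIn w e₀.2.1 :: P'.map (fun e => posIn w e.2.1) := rfl
    rw [hmc, List.getLast?_cons_cons, ← hmc, List.getLast?_map, hle]
    simp [hz]
  have hivt := ivt (posIn w (Sum.inl j)) ((e₀ :: P').map (fun e => posIn w e.2.1))
    (posIn w (Sum.inr false)) hchainpos (by omega) (posIn w (Sum.inr true)) hlastpos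
    (by omega)
  rcases List.mem_cons.1 hivt with h | h
  · omega
  · obtain ⟨e, he, hpe⟩ := List.mem_map.1 h
    have heq : e.2.1 = Sum.inl j := posIn_inj hnd (hmemw e he).2 hjl hpe
    have hnotin := (hav e he).2
    apply hnotin
    rw [heq]
    simp
    exact hjJ

lemma cover_from_sep (ht : 1 ≤ t) {S : Finset (Fin m ⊕ Bool)}
    (hS : IsTempSepT (scE n m t Sfam) (Sum.inr false) (Sum.inr true) t ↑S) :
    ∃ J : Finset (Fin m), (∀ i : Fin n, ∃ j ∈ J, i ∈ Sfam j) ∧ J.card ≤ S.card := by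
  refine ⟨Finset.univ.filter (fun j => Sum.inl j ∈ S), ?_, ?_⟩
  · intro i
    obtain ⟨hpath, htt⟩ := canonical_path (Sfam := Sfam) ht i
    have hnav := hS.2.2 _ hpath htt
    have hvx : ∃ e ∈ pathEdges (sortedSets Sfam i) ((i.1 + 1) * t),
        e.1 ∈ (↑S : Set (Fin m ⊕ Bool)) ∨ e.2.1 ∈ (↑S : Set (Fin m ⊕ Bool)) := by
      by_contra hc
      push_neg at hc
      exact hnav hc
    obtain ⟨e, he, hv⟩ := hvx
    have hep := edge_props (sortedSets_nodup i) (Or.inl he)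
    have key : ∀ v : Fin m ⊕ Bool, v ∈ wlist (sortedSets Sfam i) →
        v ∈ (↑S : Set (Fin m ⊕ Bool)) →
        ∃ j ∈ Finset.univ.filter (fun j => Sum.inl j ∈ S), i ∈ Sfam j := by
      intro v hvw hvS
      rcases mem_wlist.1 hvw with rfl | ⟨j, hjl, rfl⟩ | rfl
      · exact absurd hvS hS.1
      · exact ⟨j, Finset.mem_filter.2 ⟨Finset.mem_univ _, hvS⟩, mem_sortedSets.1 hjl⟩
      · exact absurd hvS hS.2.1
    rcases hv with hv | hv
    · exact key e.1 hep.2.1 hv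
    · exact key e.2.1 hep.2.2.1 hv
  · have hsub : (Finset.univ.filter (fun j => Sum.inl j ∈ S)).image Sum.inl ⊆ S := by
      intro v hv
      simp only [Finset.mem_image, Finset.mem_filter] at hv
      obtain ⟨j, ⟨_, hj⟩, rfl⟩ := hv
      exact hj
    calc (Finset.univ.filter (fun j => Sum.inl j ∈ S)).card
        = ((Finset.univ.filter (fun j => Sum.inl j ∈ S)).image Sum.inl).card :=
          (Finset.card_image_of_injective _ Sum.inl_injective).symm
      _ ≤ S.card := Finset.card_le_card hsub


end SC17
theorem stmt17 (n m t : ℕ) (ht : 1 ≤ t) (Sfam : Fin m → Finset (Fin n))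
    (hcov : ∀ i : Fin n, ∃ j, i ∈ Sfam j) :
    sInf {c : ℕ | ∃ S : Finset (Fin m ⊕ Bool),
        IsTempSepT (scE n m t Sfam) (Sum.inr false) (Sum.inr true) t ↑S ∧ S.card = c} =
      sInf {c : ℕ | ∃ J : Finset (Fin m), (∀ i : Fin n, ∃ j ∈ J, i ∈ Sfam j) ∧ J.card = c} := by
  classical
  set A := {c : ℕ | ∃ S : Finset (Fin m ⊕ Bool),
      IsTempSepT (scE n m t Sfam) (Sum.inr false) (Sum.inr true) t ↑S ∧ S.card = c} with hA
  set B := {c : ℕ | ∃ J : Finset (Fin m), (∀ i : Fin n, ∃ j ∈ J, i ∈ Sfam j) ∧ J.card = c}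
    with hB
  have hBne : B.Nonempty := by
    refine ⟨(Finset.univ : Finset (Fin m)).card, Finset.univ, ?_, rfl⟩
    intro i
    obtain ⟨j, hj⟩ := hcov i
    exact ⟨j, Finset.mem_univ j, hj⟩
  have hAofB : ∀ c ∈ B, ∃ a ∈ A, a ≤ c := by
    rintro c ⟨J, hJ, rfl⟩
    refine ⟨(J.image Sum.inl).card, ⟨J.image Sum.inl, SC17.sep_from_cover ht hJ, rfl⟩, ?_⟩
    rw [Finset.card_image_of_injective _ Sum.inl_injective]
  have hBofA : ∀ c ∈ A, ∃ b ∈ B, b ≤ c := by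
    rintro c ⟨S, hS, rfl⟩
    obtain ⟨J, hJ, hcard⟩ := SC17.cover_from_sep ht hS
    exact ⟨J.card, ⟨J, hJ, rfl⟩, hcard⟩
  have hAne : A.Nonempty := by
    obtain ⟨c, hc⟩ := hBne
    obtain ⟨a, ha, _⟩ := hAofB c hc
    exact ⟨a, ha⟩
  apply le_antisymm
  · obtain ⟨a, ha, hle⟩ := hAofB _ (Nat.sInf_mem hBne)
    exact le_trans (Nat.sInf_le ha) hle
  · obtain ⟨b, hb, hle⟩ := hBofA _ (Nat.sInf_mem hAne)
    exact le_trans (Nat.sInf_le hb) hle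
end

section
/- Let G = (V, E, τ) be a temporal graph and let G[t_1:t_2] = (V, E[t_1:t_2], t_2) where E[t_1:t_2] = {(u,v,t') ∈ E : t_1 ≤ t' ≤ t_2}. For each i ∈ {1, ..., τ−t}, let S_i ⊆ V \ {s,z} be an (s,z)-temporal separator of G[i : i+t]. Then S = ∪_i S_i is an (s,z,t+1)-temporal separator of G, i.e., removal of S eliminates every temporal (s,z)-path of travelling time at most t+1 in G. -/
lemma head_le {V : Type} {P : List (V × V × ℕ)}
    (hpw : P.Pairwise (fun e f : V × V × ℕ => e.2.2 ≤ f.2.2)) {h : V × V × ℕ}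
    (hh : P.head? = some h) : ∀ e ∈ P, h.2.2 ≤ e.2.2 := by
  cases P with
  | nil => simp at hh
  | cons a tl =>
    simp only [List.head?_cons, Option.some.injEq] at hh
    subst hh
    intro e he
    rcases List.mem_cons.mp he with rfl | he
    · exact le_refl _
    · exact (List.pairwise_cons.mp hpw).1 e he

lemma head_le' {V : Type} {P : List (V × V × ℕ)}
    (hpw : P.Pairwise (fun e f : V × V × ℕ => f.2.2 ≤ e.2.2)) {h : V × V × ℕ}
    (hh : P.head? = some h) : ∀ e ∈ P, e.2.2 ≤ h.2.2 := by
  cases P with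
  | nil => simp at hh
  | cons a tl =>
    simp only [List.head?_cons, Option.some.injEq] at hh
    subst hh
    intro e he
    rcases List.mem_cons.mp he with rfl | he
    · exact le_refl _
    · exact (List.pairwise_cons.mp hpw).1 e he

/-- Combining `(s,z)`-temporal separators of the windows `G[i : i+t]`,
`i = 1, ..., τ - t`, yields an `(s,z,t+1)`-temporal separator of `G`, i.e. a set
whose removal eliminates every temporal `(s,z)`-path of travelling time at most
`t + 1`. -/
theorem stmt18 {V : Type} (E : Set (V × V × ℕ)) (τ t : ℕ) (ht : t < τ) (s z : V)
    (hE : ∀ e ∈ E, 1 ≤ e.2.2 ∧ e.2.2 ≤ τ)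
    (Si : ℕ → Set V)
    (hSi : ∀ i : ℕ, 1 ≤ i → i ≤ τ - t →
      IsTempSep {e ∈ E | i ≤ e.2.2 ∧ e.2.2 ≤ i + t} s z (Si i)) :
    IsTempSepT E s z (t + 1) (⋃ i ∈ Finset.Icc 1 (τ - t), Si i) := by
  have htτ : 1 ≤ τ - t := by omega
  refine ⟨?_, ?_, ?_⟩
  · simp only [Set.mem_iUnion, not_exists]
    intro i hi
    exact ((hSi i (Finset.mem_Icc.mp hi).1 (Finset.mem_Icc.mp hi).2).1 : s ∉ Si i)
  · simp only [Set.mem_iUnion, not_exists]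
    intro i hi
    exact ((hSi i (Finset.mem_Icc.mp hi).1 (Finset.mem_Icc.mp hi).2).2.1 : z ∉ Si i)
  · intro P hP httime hAv
    obtain ⟨hne, hmem, hhead, hlast, hchain⟩ := hP
    obtain ⟨h, hh⟩ : ∃ h, P.head? = some h := by cases P with
      | nil => exact absurd rfl hne
      | cons a tl => exact ⟨a, rfl⟩
    obtain ⟨l, hl⟩ : ∃ l, P.getLast? = some l :=
      ⟨P.getLast hne, List.getLast?_eq_getLast hne⟩
    have hpw : P.Pairwise (fun e f : V × V × ℕ => e.2.2 ≤ f.2.2) := by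
      have : IsTrans (V × V × ℕ) (fun e f : V × V × ℕ => e.2.2 ≤ f.2.2) :=
        ⟨fun _ _ _ hab hbc => le_trans hab hbc⟩
      exact List.isChain_iff_pairwise.mp (hchain.imp (fun _ _ hef => hef.2))
    have hhle : ∀ e ∈ P, h.2.2 ≤ e.2.2 := head_le hpw hh
    have hlle : ∀ e ∈ P, e.2.2 ≤ l.2.2 := by
      have hpw' : P.reverse.Pairwise (fun e f : V × V × ℕ => f.2.2 ≤ e.2.2) := by
        rw [List.pairwise_reverse]; exact hpw
      have hh' : P.reverse.head? = some l := by
        rw [List.head?_reverse]; exact hl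
      intro e he
      exact head_le' hpw' hh' e (List.mem_reverse.mpr he)
    have hhmem : h ∈ P := List.mem_of_mem_head? (by simp [hh])
    have hlmem : l ∈ P := List.mem_of_mem_getLast? (by simp [hl])
    have hh1 : 1 ≤ h.2.2 := (hE h (hmem h hhmem)).1
    have hlτ : l.2.2 ≤ τ := (hE l (hmem l hlmem)).2
    have httime' : l.2.2 + 1 - h.2.2 ≤ t + 1 := by
      have : ttime P = l.2.2 + 1 - h.2.2 := by
        simp [ttime, hh, hl]
      omega
    set i := min h.2.2 (τ - t) with hi
    have hi1 : 1 ≤ i := by omega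
    have hiτ : i ≤ τ - t := by omega
    have hSep := hSi i hi1 hiτ
    refine hSep.2.2 P ⟨hne, ?_, hhead, hlast, hchain⟩ ?_
    · intro e he
      refine ⟨hmem e he, ?_, ?_⟩
      · have := hhle e he
        omega
      · have h1 := hlle e he
        have h2 := hhle l hlmem
        have : e.2.2 ≤ τ := (hE e (hmem e he)).2
        omega
    · intro e he
      obtain ⟨h1, h2⟩ := hAv e he
      constructor
      · intro hc
        exact h1 (Set.mem_iUnion.mpr ⟨i, Set.mem_iUnion.mpr
          ⟨Finset.mem_Icc.mpr ⟨hi1, hiτ⟩, hc⟩⟩)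
      · intro hc
        exact h2 (Set.mem_iUnion.mpr ⟨i, Set.mem_iUnion.mpr
          ⟨Finset.mem_Icc.mpr ⟨hi1, hiτ⟩, hc⟩⟩)
end
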